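/- arXiv:1009.5189 — 9 statements merged into one kernel-verified Lean document; each statement's English description precedes it below -/
import Mathlib

section
/- Let α, β, β′, β″, γ be real numbers with 0 < α < γ, and let x, y, z be real numbers with x < 1, y < 1, z < 1. Then ∫₀¹ u^(α−1)·(1−u)^(γ−α−1)·(1−u·x)^(−β)·(1−u·y)^(−β′)·(1−u·z)^(−β″) du = (1−y)^(γ−α−β′)·(1−x)^(−β)·(1−z)^(−β″) · ∫₀¹ ν^(γ−α−1)·(1−ν)^(α−1)·(1−ν·y)^(−(γ−β−β′−β″))·(1−ν·(x−y)/(x−1))^(−β)·(1−ν·(z−y)/(z−1))^(−β″) dν. Equivalently, in terms of the Euler integral form of Lauricella's F_D: F_D(α, β, β′, β″, γ; x, y, z) = (1−y)^(γ−α−β′)·(1−x)^(−β)·(1−z)^(−β″) · F_D(γ−α, β, γ−β−β′−β″, β″, γ; (x−y)/(x−1), y, (z−y)/(z−1)). -/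
open MeasureTheory Set

lemma aux_pos {w t : ℝ} (hw : w < 1) (ht0 : 0 ≤ t) (ht1 : t ≤ 1) : 0 < 1 - t * w := by
  rcases le_or_gt w 0 with h | h
  · nlinarith
  · nlinarith

lemma aux_cont {w b : ℝ} (hw : w < 1) :
    ContinuousOn (fun t : ℝ => (1 - t * w) ^ b) (Set.Icc 0 1) :=
  ((continuous_const.sub (continuous_id.mul continuous_const)).continuousOn).rpow_const
    fun t ht => Or.inl (aux_pos hw ht.1 ht.2).ne'

lemma beta_type_integrable {p q : ℝ} (hp : 0 < p) (hq : 0 < q) {h : ℝ → ℝ}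
    (hh : ContinuousOn h (Set.Icc 0 1)) :
    IntervalIntegrable (fun t => t ^ (p - 1) * (1 - t) ^ (q - 1) * h t) volume 0 1 := by
  have hI1 : IntervalIntegrable (fun t : ℝ => t ^ (p - 1) * ((1 - t) ^ (q - 1) * h t))
      volume 0 (1/2) := by
    apply (intervalIntegral.intervalIntegrable_rpow' (by linarith)).mul_continuousOn
    rw [uIcc_of_le (by norm_num : (0:ℝ) ≤ 1/2)]
    apply ContinuousOn.mul
    · apply ((continuous_const.sub continuous_id).continuousOn).rpow_const
      intro t ht
      exact Or.inl (by nlinarith [ht.2] : (0:ℝ) < 1 - t).ne'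
    · exact hh.mono (Icc_subset_Icc le_rfl (by norm_num))
  have h2 : IntervalIntegrable (fun t : ℝ => (1 - t) ^ (q - 1)) volume (1/2) 1 := by
    have := (intervalIntegral.intervalIntegrable_rpow' (r := q - 1) (by linarith)
      (a := 0) (b := 1/2)).comp_sub_left 1
    norm_num at this
    exact this.symm
  have hI2 : IntervalIntegrable (fun t : ℝ => (1 - t) ^ (q - 1) * (t ^ (p - 1) * h t))
      volume (1/2) 1 := by
    apply h2.mul_continuousOn
    rw [uIcc_of_le (by norm_num : (1:ℝ)/2 ≤ 1)]
    apply ContinuousOn.mul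
    · apply (continuous_id.continuousOn).rpow_const
      intro t ht
      exact Or.inl (by nlinarith [ht.1] : (0:ℝ) < t).ne'
    · exact hh.mono (Icc_subset_Icc (by norm_num) le_rfl)
  have hI2' : IntervalIntegrable (fun t : ℝ => t ^ (p - 1) * ((1 - t) ^ (q - 1) * h t))
      volume (1/2) 1 := by
    have : (fun t : ℝ => t ^ (p - 1) * ((1 - t) ^ (q - 1) * h t)) =
        fun t : ℝ => (1 - t) ^ (q - 1) * (t ^ (p - 1) * h t) := by
      funext t; ring
    rw [this]; exact hI2
  have := hI1.trans hI2'
  have heq : (fun t : ℝ => t ^ (p - 1) * (1 - t) ^ (q - 1) * h t) =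
      fun t : ℝ => t ^ (p - 1) * ((1 - t) ^ (q - 1) * h t) := by
    funext t; ring
  rw [heq]; exact this

lemma frac_lt_one {x y : ℝ} (hx : x < 1) (hy : y < 1) : (x - y) / (x - 1) < 1 := by
  have h1x : (0:ℝ) < 1 - x := by linarith
  have hne : x - 1 ≠ 0 := sub_ne_zero.mpr (ne_of_lt hx)
  have : (x - y) / (x - 1) = 1 - (1 - y) / (1 - x) := by
    rw [div_eq_iff hne]
    field_simp
    ring
  rw [this]
  have : 0 < (1 - y) / (1 - x) := div_pos (by linarith) h1x
  linarith

lemma key_pointwise (α β β' β'' γ x y z : ℝ) (hx : x < 1) (hy : y < 1) (hz : z < 1)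
    {ν : ℝ} (hν : ν ∈ Set.Ioo (0:ℝ) 1) :
    ((y - 1) / (1 - ν * y) ^ 2) *
      (((1 - ν) / (1 - ν * y)) ^ (α - 1) * (1 - (1 - ν) / (1 - ν * y)) ^ (γ - α - 1) *
        (1 - (1 - ν) / (1 - ν * y) * x) ^ (-β) * (1 - (1 - ν) / (1 - ν * y) * y) ^ (-β') *
        (1 - (1 - ν) / (1 - ν * y) * z) ^ (-β'')) =
    -((1 - y) ^ (γ - α - β') * (1 - x) ^ (-β) * (1 - z) ^ (-β'') *
      (ν ^ (γ - α - 1) * (1 - ν) ^ (α - 1) * (1 - ν * y) ^ (-(γ - β - β' - β'')) *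
        (1 - ν * ((x - y) / (x - 1))) ^ (-β) * (1 - ν * ((z - y) / (z - 1))) ^ (-β''))) := by
  obtain ⟨hν0, hν1⟩ := hν
  have hs : 0 < 1 - ν * y := aux_pos hy hν0.le hν1.le
  have h1x : (0:ℝ) < 1 - x := by linarith
  have h1y : (0:ℝ) < 1 - y := by linarith
  have h1z : (0:ℝ) < 1 - z := by linarith
  have h1ν : (0:ℝ) < 1 - ν := by linarith
  have hνX : 0 < 1 - ν * ((x - y) / (x - 1)) := aux_pos (frac_lt_one hx hy) hν0.le hν1.le
  have hνZ : 0 < 1 - ν * ((z - y) / (z - 1)) := aux_pos (frac_lt_one hz hy) hν0.le hν1.le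
  have hxne : x - 1 ≠ 0 := by intro h; apply absurd hx; simp [sub_eq_zero.mp h]
  have hzne : z - 1 ≠ 0 := by intro h; apply absurd hz; simp [sub_eq_zero.mp h]
  have e0 : 1 - (1 - ν) / (1 - ν * y) = ν * (1 - y) / (1 - ν * y) := by
    field_simp
    ring
  have e1 : 1 - (1 - ν) / (1 - ν * y) * x =
      (1 - x) * (1 - ν * ((x - y) / (x - 1))) / (1 - ν * y) := by
    field_simp
    ring
  have e2 : 1 - (1 - ν) / (1 - ν * y) * y = (1 - y) / (1 - ν * y) := by
    field_simp
    ring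
  have e3 : 1 - (1 - ν) / (1 - ν * y) * z =
      (1 - z) * (1 - ν * ((z - y) / (z - 1))) / (1 - ν * y) := by
    field_simp
    ring
  rw [e0, e1, e2, e3]
  rw [Real.div_rpow h1ν.le hs.le, Real.div_rpow (by positivity) hs.le,
    Real.mul_rpow hν0.le h1y.le, Real.div_rpow (by positivity) hs.le,
    Real.mul_rpow h1x.le hνX.le, Real.div_rpow h1y.le hs.le,
    Real.div_rpow (by positivity) hs.le, Real.mul_rpow h1z.le hνZ.le]
  have hs2 : (1 - ν * y) ^ (-(γ - β - β' - β'')) =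
      ((1 - ν * y) ^ (2:ℕ))⁻¹ * ((1 - ν * y) ^ (α - 1))⁻¹ * ((1 - ν * y) ^ (γ - α - 1))⁻¹ *
        ((1 - ν * y) ^ (-β))⁻¹ * ((1 - ν * y) ^ (-β'))⁻¹ * ((1 - ν * y) ^ (-β''))⁻¹ := by
    have h : -(γ - β - β' - β'') =
        -((2:ℕ):ℝ) + -(α - 1) + -(γ - α - 1) + -(-β) + -(-β') + -(-β'') := by
      push_cast; ring
    rw [h, Real.rpow_add hs, Real.rpow_add hs, Real.rpow_add hs, Real.rpow_add hs,
      Real.rpow_add hs, Real.rpow_neg hs.le ((2:ℕ):ℝ), Real.rpow_neg hs.le (α - 1),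
      Real.rpow_neg hs.le (γ - α - 1), Real.rpow_neg hs.le (-β), Real.rpow_neg hs.le (-β'),
      Real.rpow_neg hs.le (-β''), Real.rpow_natCast]
  have h1ys : (1 - y) ^ (γ - α - β') = (1 - y) * (1 - y) ^ (γ - α - 1) * (1 - y) ^ (-β') := by
    have h : γ - α - β' = 1 + (γ - α - 1) + (-β') := by ring
    rw [h, Real.rpow_add h1y, Real.rpow_add h1y, Real.rpow_one]
  rw [hs2, h1ys]
  ring

/-- Lauricella's fourth hypergeometric function of three variables,
in its Euler integral form. -/
noncomputable def FD (a b₁ b₂ b₃ c x₁ x₂ x₃ : ℝ) : ℝ :=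
  (Real.Gamma c / (Real.Gamma a * Real.Gamma (c - a))) *
    ∫ u in (0:ℝ)..1, u ^ (a - 1) * (1 - u) ^ (c - a - 1) *
      (1 - u * x₁) ^ (-b₁) * (1 - u * x₂) ^ (-b₂) * (1 - u * x₃) ^ (-b₃)

theorem FD_transformation_prop1 (α β β' β'' γ x y z : ℝ)
    (hα : 0 < α) (hαγ : α < γ) (hx : x < 1) (hy : y < 1) (hz : z < 1) :
    (∫ u in (0:ℝ)..1, u ^ (α - 1) * (1 - u) ^ (γ - α - 1) *
        (1 - u * x) ^ (-β) * (1 - u * y) ^ (-β') * (1 - u * z) ^ (-β'')) =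
      (1 - y) ^ (γ - α - β') * (1 - x) ^ (-β) * (1 - z) ^ (-β'') *
        ∫ ν in (0:ℝ)..1, ν ^ (γ - α - 1) * (1 - ν) ^ (α - 1) *
          (1 - ν * y) ^ (-(γ - β - β' - β'')) *
          (1 - ν * ((x - y) / (x - 1))) ^ (-β) *
          (1 - ν * ((z - y) / (z - 1))) ^ (-β'') ∧
    FD α β β' β'' γ x y z =
      (1 - y) ^ (γ - α - β') * (1 - x) ^ (-β) * (1 - z) ^ (-β'') *
        FD (γ - α) β (γ - β - β' - β'') β'' γ ((x - y) / (x - 1)) y ((z - y) / (z - 1)) := by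
  have hγα : 0 < γ - α := by linarith
  have h1y : (0:ℝ) < 1 - y := by linarith
  set F : ℝ → ℝ := fun u => u ^ (α - 1) * (1 - u) ^ (γ - α - 1) * (1 - u * x) ^ (-β) *
    (1 - u * y) ^ (-β') * (1 - u * z) ^ (-β'') with hF
  set G : ℝ → ℝ := fun ν => ν ^ (γ - α - 1) * (1 - ν) ^ (α - 1) *
    (1 - ν * y) ^ (-(γ - β - β' - β'')) * (1 - ν * ((x - y) / (x - 1))) ^ (-β) *
    (1 - ν * ((z - y) / (z - 1))) ^ (-β'') with hG
  have hφc : ContinuousOn (fun ν : ℝ => (1 - ν) / (1 - ν * y)) (Set.uIcc (0:ℝ) 1) := by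
    rw [Set.uIcc_of_le zero_le_one]
    exact ContinuousOn.div ((continuous_const.sub continuous_id).continuousOn)
      ((continuous_const.sub (continuous_id.mul continuous_const)).continuousOn)
      (fun ν hν => (aux_pos hy hν.1 hν.2).ne')
  have hφmem : ∀ ν ∈ Set.Icc (0:ℝ) 1, (1 - ν) / (1 - ν * y) ∈ Set.Icc (0:ℝ) 1 := by
    intro ν hν
    have hs := aux_pos hy hν.1 hν.2
    constructor
    · exact div_nonneg (by linarith [hν.2]) hs.le
    · rw [div_le_one hs]
      nlinarith [mul_nonneg hν.1 h1y.le]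
  have hφmemo : ∀ ν ∈ Set.Ioo (0:ℝ) 1, (1 - ν) / (1 - ν * y) ∈ Set.Ioo (0:ℝ) 1 := by
    intro ν hν
    have hs := aux_pos hy hν.1.le hν.2.le
    constructor
    · exact div_pos (by linarith [hν.2]) hs
    · rw [div_lt_one hs]
      nlinarith [mul_pos hν.1 h1y]
  have hFcont : ContinuousOn F (Set.Ioo 0 1) := by
    rw [hF]
    apply ContinuousOn.mul
    apply ContinuousOn.mul
    apply ContinuousOn.mul
    apply ContinuousOn.mul
    · exact (continuous_id.continuousOn).rpow_const fun t ht => Or.inl (ne_of_gt ht.1)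
    · exact ((continuous_const.sub continuous_id).continuousOn).rpow_const
        fun t ht => Or.inl (by linarith [ht.2] : (0:ℝ) < 1 - t).ne'
    · exact (aux_cont hx).mono Set.Ioo_subset_Icc_self
    · exact (aux_cont hy).mono Set.Ioo_subset_Icc_self
    · exact (aux_cont hz).mono Set.Ioo_subset_Icc_self
  have hFint : IntervalIntegrable F volume 0 1 := by
    have h := beta_type_integrable hα hγα
      (h := fun u : ℝ => (1 - u * x) ^ (-β) * (1 - u * y) ^ (-β') * (1 - u * z) ^ (-β''))
      (((aux_cont hx).mul (aux_cont hy)).mul (aux_cont hz))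
    have heq : F = fun t : ℝ => t ^ (α - 1) * (1 - t) ^ (γ - α - 1) *
        ((1 - t * x) ^ (-β) * (1 - t * y) ^ (-β') * (1 - t * z) ^ (-β'')) := by
      funext t; rw [hF]; ring
    rw [heq]; exact h
  have hGint : IntervalIntegrable G volume 0 1 := by
    have h := beta_type_integrable hγα hα
      (h := fun u : ℝ => (1 - u * y) ^ (-(γ - β - β' - β'')) *
        (1 - u * ((x - y) / (x - 1))) ^ (-β) * (1 - u * ((z - y) / (z - 1))) ^ (-β''))
      (((aux_cont hy).mul (aux_cont (frac_lt_one hx hy))).mul (aux_cont (frac_lt_one hz hy)))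
    have heq : G = fun t : ℝ => t ^ (γ - α - 1) * (1 - t) ^ (α - 1) *
        ((1 - t * y) ^ (-(γ - β - β' - β'')) * (1 - t * ((x - y) / (x - 1))) ^ (-β) *
          (1 - t * ((z - y) / (z - 1))) ^ (-β'')) := by
      funext t; rw [hG]; ring
    rw [heq]; exact h
  have hderiv : ∀ ν ∈ Set.Ioo (min (0:ℝ) 1) (max (0:ℝ) 1),
      HasDerivWithinAt (fun ν : ℝ => (1 - ν) / (1 - ν * y))
        ((fun ν : ℝ => (y - 1) / (1 - ν * y) ^ 2) ν) (Set.Ioi ν) ν := by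
    rw [min_eq_left zero_le_one, max_eq_right zero_le_one]
    intro ν hν
    have hs : (1 - ν * y) ≠ 0 := (aux_pos hy hν.1.le hν.2.le).ne'
    have h1 : HasDerivAt (fun ν : ℝ => 1 - ν) (-1) ν := by
      simpa using (hasDerivAt_id ν).const_sub 1
    have h2 : HasDerivAt (fun ν : ℝ => 1 - ν * y) (-(1 * y)) ν := by
      simpa using ((hasDerivAt_id ν).mul_const y).const_sub 1
    have h3 : HasDerivAt (fun ν : ℝ => (1 - ν) / (1 - ν * y))
        ((y - 1) / (1 - ν * y) ^ 2) ν := by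
      have h4 := h1.div h2 hs
      change HasDerivAt (fun ν : ℝ => (1 - ν) / (1 - ν * y)) _ ν at h4
      convert h4 using 1
      ring
    exact h3.hasDerivWithinAt
  have hgc : ContinuousOn F ((fun ν : ℝ => (1 - ν) / (1 - ν * y)) ''
      Set.Ioo (min (0:ℝ) 1) (max (0:ℝ) 1)) := by
    rw [min_eq_left zero_le_one, max_eq_right zero_le_one]
    refine hFcont.mono ?_
    rintro u ⟨ν, hν, rfl⟩
    exact hφmemo ν hν
  have hg1 : IntegrableOn F ((fun ν : ℝ => (1 - ν) / (1 - ν * y)) '' Set.uIcc (0:ℝ) 1) := by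
    have hicc : IntegrableOn F (Set.Icc 0 1) := by
      have := (intervalIntegrable_iff').mp hFint
      rwa [Set.uIcc_of_le zero_le_one] at this
    apply hicc.mono_set
    rintro u ⟨ν, hν, rfl⟩
    rw [Set.uIcc_of_le zero_le_one] at hν
    exact hφmem ν hν
  have hg2 : IntegrableOn (fun ν : ℝ => (fun ν : ℝ => (y - 1) / (1 - ν * y) ^ 2) ν •
      (F ∘ fun ν : ℝ => (1 - ν) / (1 - ν * y)) ν) (Set.uIcc (0:ℝ) 1) := by
    rw [Set.uIcc_of_le zero_le_one, integrableOn_Icc_iff_integrableOn_Ioo]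
    have hGicc : IntegrableOn G (Set.Icc 0 1) := by
      have := (intervalIntegrable_iff').mp hGint
      rwa [Set.uIcc_of_le zero_le_one] at this
    have hneg : IntegrableOn (fun ν : ℝ =>
        -((1 - y) ^ (γ - α - β') * (1 - x) ^ (-β) * (1 - z) ^ (-β'') * G ν))
        (Set.Ioo (0:ℝ) 1) :=
      ((hGicc.mono_set Set.Ioo_subset_Icc_self).const_mul _).neg
    apply hneg.congr_fun ?_ measurableSet_Ioo
    intro ν hν
    exact (key_pointwise α β β' β'' γ x y z hx hy hz hν).symm
  have hsub := intervalIntegral.integral_comp_smul_deriv'''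
    (f := fun ν : ℝ => (1 - ν) / (1 - ν * y))
    (f' := fun ν : ℝ => (y - 1) / (1 - ν * y) ^ 2) (g := F) (a := 0) (b := 1)
    hφc hderiv hgc hg1 hg2
  have hL : (∫ ν in (0:ℝ)..1, (fun ν : ℝ => (y - 1) / (1 - ν * y) ^ 2) ν •
      (F ∘ fun ν : ℝ => (1 - ν) / (1 - ν * y)) ν) =
      ∫ ν in (0:ℝ)..1, -((1 - y) ^ (γ - α - β') * (1 - x) ^ (-β) * (1 - z) ^ (-β'') * G ν) := by
    rw [intervalIntegral.integral_of_le zero_le_one,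
      intervalIntegral.integral_of_le zero_le_one,
      MeasureTheory.integral_Ioc_eq_integral_Ioo,
      MeasureTheory.integral_Ioc_eq_integral_Ioo]
    apply MeasureTheory.setIntegral_congr_fun measurableSet_Ioo
    intro ν hν
    exact key_pointwise α β β' β'' γ x y z hx hy hz hν
  rw [hL] at hsub
  rw [show ((1:ℝ) - 0) / (1 - 0 * y) = 1 by norm_num,
    show ((1:ℝ) - 1) / (1 - 1 * y) = 0 by norm_num] at hsub
  rw [intervalIntegral.integral_symm 0 1, intervalIntegral.integral_neg,
    intervalIntegral.integral_const_mul] at hsub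
  have hmain : (∫ u in (0:ℝ)..1, F u) =
      (1 - y) ^ (γ - α - β') * (1 - x) ^ (-β) * (1 - z) ^ (-β'') * ∫ ν in (0:ℝ)..1, G ν := by
    linarith [hsub]
  refine ⟨hmain, ?_⟩
  simp only [FD]
  rw [← hF, hmain]
  have hint2 : (∫ u in (0:ℝ)..1, u ^ (γ - α - 1) * (1 - u) ^ (γ - (γ - α) - 1) *
      (1 - u * ((x - y) / (x - 1))) ^ (-β) * (1 - u * y) ^ (-(γ - β - β' - β'')) *
      (1 - u * ((z - y) / (z - 1))) ^ (-β'')) = ∫ ν in (0:ℝ)..1, G ν := by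
    apply intervalIntegral.integral_congr
    intro u hu
    simp only [hG, show γ - (γ - α) - 1 = α - 1 by ring]
    ring
  rw [hint2, show γ - (γ - α) = α by ring]
  ring
end

section
/- Let α, β, β′, β″, γ be real numbers with 0 < α < γ, and let x, y, z be real numbers with x < 1, y < 1, z < 1. Then ∫₀¹ u^(α−1)·(1−u)^(γ−α−1)·(1−u·x)^(−β)·(1−u·y)^(−β′)·(1−u·z)^(−β″) du = (1−z)^(−α) · ∫₀¹ ν^(α−1)·(1−ν)^(γ−α−1)·(1−ν·(z−x)/(z−1))^(−β)·(1−ν·(z−y)/(z−1))^(−β′)·(1−ν·z/(z−1))^(−(γ−β−β′−β″)) dν. Equivalently, in terms of the Euler integral form of Lauricella's F_D: F_D(α, β, β′, β″, γ; x, y, z) = (1−z)^(−α) · F_D(α, β, β′, γ−β−β′−β″, γ; (z−x)/(z−1), (z−y)/(z−1), z/(z−1)). -/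
open MeasureTheory

private lemma rpw (a b : ℝ) (ha : 0 < a) : a ^ b = Real.exp (b * Real.log a) := by
  rw [Real.rpow_def_of_pos ha, mul_comm]

private lemma FD_key (α β β' β'' γ x y z ν : ℝ) (hx : x < 1) (hy : y < 1) (hz : z < 1)
    (hν0 : 0 < ν) (hν1 : ν < 1) :
    |(1 - z) / (1 - z + ν * z) ^ 2| *
      ((ν / (1 - z + ν * z)) ^ (α - 1) * (1 - ν / (1 - z + ν * z)) ^ (γ - α - 1) *
        (1 - ν / (1 - z + ν * z) * x) ^ (-β) * (1 - ν / (1 - z + ν * z) * y) ^ (-β') *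
        (1 - ν / (1 - z + ν * z) * z) ^ (-β'')) =
    (1 - z) ^ (-α) *
      (ν ^ (α - 1) * (1 - ν) ^ (γ - α - 1) * (1 - ν * ((z - x) / (z - 1))) ^ (-β) *
        (1 - ν * ((z - y) / (z - 1))) ^ (-β') * (1 - ν * (z / (z - 1))) ^ (-(γ - β - β' - β''))) := by
  have hs : 0 < 1 - z := by linarith
  have hw : 0 < 1 - z + ν * z := by nlinarith
  have hwx : 0 < 1 - z + ν * z - ν * x := by nlinarith
  have hwy : 0 < 1 - z + ν * z - ν * y := by nlinarith
  have hz1 : z - 1 ≠ 0 := by intro h; linarith [sub_eq_zero.mp h]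
  have e1 : 1 - ν / (1 - z + ν * z) = (1 - z) * (1 - ν) / (1 - z + ν * z) := by
    field_simp; ring
  have e2 : 1 - ν / (1 - z + ν * z) * x = (1 - z + ν * z - ν * x) / (1 - z + ν * z) := by
    field_simp
  have e3 : 1 - ν / (1 - z + ν * z) * y = (1 - z + ν * z - ν * y) / (1 - z + ν * z) := by
    field_simp
  have e4 : 1 - ν / (1 - z + ν * z) * z = (1 - z) / (1 - z + ν * z) := by
    field_simp
    ring
  have e5 : 1 - ν * ((z - x) / (z - 1)) = (1 - z + ν * z - ν * x) / (1 - z) := by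
    field_simp
    ring
  have e6 : 1 - ν * ((z - y) / (z - 1)) = (1 - z + ν * z - ν * y) / (1 - z) := by
    field_simp
    ring
  have e7 : 1 - ν * (z / (z - 1)) = (1 - z + ν * z) / (1 - z) := by
    field_simp
    ring
  rw [e1, e2, e3, e4, e5, e6, e7, abs_of_pos (by positivity)]
  have efac : (1 - z) / (1 - z + ν * z) ^ 2
      = Real.exp (Real.log (1 - z) - 2 * Real.log (1 - z + ν * z)) := by
    rw [← Real.exp_log (show (0:ℝ) < (1 - z) / (1 - z + ν * z) ^ 2 by positivity),
      Real.log_div hs.ne' (by positivity), Real.log_pow]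
    norm_num
  rw [efac,
    rpw _ _ (show (0:ℝ) < ν / (1 - z + ν * z) by positivity),
    rpw _ _ (div_pos (mul_pos hs (show (0:ℝ) < 1 - ν by linarith)) hw),
    rpw _ _ (show (0:ℝ) < (1 - z + ν * z - ν * x) / (1 - z + ν * z) by positivity),
    rpw _ _ (show (0:ℝ) < (1 - z + ν * z - ν * y) / (1 - z + ν * z) by positivity),
    rpw _ _ (show (0:ℝ) < (1 - z) / (1 - z + ν * z) by positivity),
    rpw _ _ hs,
    rpw _ _ hν0,
    rpw _ _ (show (0:ℝ) < 1 - ν by linarith),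
    rpw _ _ (show (0:ℝ) < (1 - z + ν * z - ν * x) / (1 - z) by positivity),
    rpw _ _ (show (0:ℝ) < (1 - z + ν * z - ν * y) / (1 - z) by positivity),
    rpw _ _ (show (0:ℝ) < (1 - z + ν * z) / (1 - z) by positivity),
    Real.log_div hν0.ne' hw.ne',
    Real.log_div (mul_pos hs (show (0:ℝ) < 1 - ν by linarith)).ne' hw.ne',
    Real.log_mul hs.ne' (by linarith : (1:ℝ) - ν ≠ 0),
    Real.log_div hwx.ne' hw.ne', Real.log_div hwy.ne' hw.ne',
    Real.log_div hs.ne' hw.ne',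
    Real.log_div hwx.ne' hs.ne', Real.log_div hwy.ne' hs.ne',
    Real.log_div hw.ne' hs.ne']
  simp only [← Real.exp_add]
  rw [Real.exp_eq_exp]
  ring

theorem FD_transformation_prop2 (α β β' β'' γ x y z : ℝ)
    (hα : 0 < α) (hαγ : α < γ) (hx : x < 1) (hy : y < 1) (hz : z < 1) :
    (∫ u in (0:ℝ)..1, u ^ (α - 1) * (1 - u) ^ (γ - α - 1) *
        (1 - u * x) ^ (-β) * (1 - u * y) ^ (-β') * (1 - u * z) ^ (-β'')) =
      (1 - z) ^ (-α) *
        ∫ ν in (0:ℝ)..1, ν ^ (α - 1) * (1 - ν) ^ (γ - α - 1) *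
          (1 - ν * ((z - x) / (z - 1))) ^ (-β) *
          (1 - ν * ((z - y) / (z - 1))) ^ (-β') *
          (1 - ν * (z / (z - 1))) ^ (-(γ - β - β' - β'')) ∧
    FD α β β' β'' γ x y z =
      (1 - z) ^ (-α) *
        FD α β β' (γ - β - β' - β'') γ ((z - x) / (z - 1)) ((z - y) / (z - 1)) (z / (z - 1)) := by
  have hs : 0 < 1 - z := by linarith
  set φ : ℝ → ℝ := fun ν => ν / (1 - z + ν * z) with hφdef
  have hwpos : ∀ ν ∈ Set.Ioo (0:ℝ) 1, 0 < 1 - z + ν * z := by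
    intro ν hν
    obtain ⟨h1, h2⟩ := hν
    nlinarith
  have hderiv : ∀ ν ∈ Set.Ioo (0:ℝ) 1,
      HasDerivWithinAt φ ((1 - z) / (1 - z + ν * z) ^ 2) (Set.Ioo 0 1) ν := by
    intro ν hν
    have hw := hwpos ν hν
    have h : HasDerivAt (fun t : ℝ => t / (1 - z + t * z))
        ((1 * (1 - z + ν * z) - ν * (1 * z)) / (1 - z + ν * z) ^ 2) ν :=
      (hasDerivAt_id ν).div (((hasDerivAt_id ν).mul_const z).const_add (1 - z)) hw.ne'
    have h2 : (1 * (1 - z + ν * z) - ν * (1 * z)) / (1 - z + ν * z) ^ 2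
        = (1 - z) / (1 - z + ν * z) ^ 2 := by ring_nf
    exact (h2 ▸ h).hasDerivWithinAt
  have hleft : ∀ ν ∈ Set.Ioo (0:ℝ) 1, φ ν * (1 - z) / (1 - φ ν * z) = ν := by
    intro ν hν
    have hw := hwpos ν hν
    have hnum : 1 - φ ν * z = (1 - z) / (1 - z + ν * z) := by
      simp only [hφdef]
      field_simp
      ring
    rw [hnum]
    simp only [hφdef]
    field_simp
  have hinj : Set.InjOn φ (Set.Ioo 0 1) := by
    intro a ha b hb hab
    have := hleft a ha
    rw [hab, hleft b hb] at this
    exact this.symm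
  have himg : φ '' Set.Ioo 0 1 = Set.Ioo 0 1 := by
    ext u
    simp only [Set.mem_image, Set.mem_Ioo]
    constructor
    · rintro ⟨ν, ⟨hν0, hν1⟩, rfl⟩
      have hw : 0 < 1 - z + ν * z := hwpos ν ⟨hν0, hν1⟩
      exact ⟨div_pos hν0 hw, (div_lt_one hw).mpr (by nlinarith)⟩
    · rintro ⟨hu0, hu1⟩
      have h1uz : 0 < 1 - u * z := by nlinarith
      refine ⟨u * (1 - z) / (1 - u * z),
        ⟨div_pos (mul_pos hu0 hs) h1uz, (div_lt_one h1uz).mpr (by nlinarith)⟩, ?_⟩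
      show u * (1 - z) / (1 - u * z) / (1 - z + u * (1 - z) / (1 - u * z) * z) = u
      have hden : 1 - z + u * (1 - z) / (1 - u * z) * z = (1 - z) / (1 - u * z) := by
        rw [div_mul_eq_mul_div, eq_div_iff h1uz.ne', add_mul, div_mul_cancel₀ _ h1uz.ne']
        ring
      have h1 : (1 - u * z) ≠ 0 := h1uz.ne'
      have h2 : (1 - z) ≠ 0 := hs.ne'
      rw [hden]
      rw [div_div_div_eq]
      field_simp
  have hmain : (∫ u in (0:ℝ)..1, u ^ (α - 1) * (1 - u) ^ (γ - α - 1) *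
        (1 - u * x) ^ (-β) * (1 - u * y) ^ (-β') * (1 - u * z) ^ (-β'')) =
      (1 - z) ^ (-α) *
        ∫ ν in (0:ℝ)..1, ν ^ (α - 1) * (1 - ν) ^ (γ - α - 1) *
          (1 - ν * ((z - x) / (z - 1))) ^ (-β) *
          (1 - ν * ((z - y) / (z - 1))) ^ (-β') *
          (1 - ν * (z / (z - 1))) ^ (-(γ - β - β' - β'')) := by
    rw [intervalIntegral.integral_of_le zero_le_one,
      intervalIntegral.integral_of_le zero_le_one,
      MeasureTheory.integral_Ioc_eq_integral_Ioo,
      MeasureTheory.integral_Ioc_eq_integral_Ioo]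
    calc (∫ u in Set.Ioo (0:ℝ) 1, u ^ (α - 1) * (1 - u) ^ (γ - α - 1) *
            (1 - u * x) ^ (-β) * (1 - u * y) ^ (-β') * (1 - u * z) ^ (-β''))
        = ∫ u in φ '' Set.Ioo (0:ℝ) 1, u ^ (α - 1) * (1 - u) ^ (γ - α - 1) *
            (1 - u * x) ^ (-β) * (1 - u * y) ^ (-β') * (1 - u * z) ^ (-β'') := by rw [himg]
      _ = ∫ ν in Set.Ioo (0:ℝ) 1, |(1 - z) / (1 - z + ν * z) ^ 2| •
            ((φ ν) ^ (α - 1) * (1 - φ ν) ^ (γ - α - 1) *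
              (1 - φ ν * x) ^ (-β) * (1 - φ ν * y) ^ (-β') * (1 - φ ν * z) ^ (-β'')) :=
          MeasureTheory.integral_image_eq_integral_abs_deriv_smul measurableSet_Ioo hderiv hinj _
      _ = ∫ ν in Set.Ioo (0:ℝ) 1, (1 - z) ^ (-α) *
            (ν ^ (α - 1) * (1 - ν) ^ (γ - α - 1) * (1 - ν * ((z - x) / (z - 1))) ^ (-β) *
              (1 - ν * ((z - y) / (z - 1))) ^ (-β') *
              (1 - ν * (z / (z - 1))) ^ (-(γ - β - β' - β''))) := by
          refine setIntegral_congr_fun measurableSet_Ioo (fun ν hν => ?_)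
          rw [smul_eq_mul]
          exact FD_key α β β' β'' γ x y z ν hx hy hz hν.1 hν.2
      _ = (1 - z) ^ (-α) * ∫ ν in Set.Ioo (0:ℝ) 1,
            ν ^ (α - 1) * (1 - ν) ^ (γ - α - 1) * (1 - ν * ((z - x) / (z - 1))) ^ (-β) *
              (1 - ν * ((z - y) / (z - 1))) ^ (-β') *
              (1 - ν * (z / (z - 1))) ^ (-(γ - β - β' - β'')) := by
          rw [MeasureTheory.integral_const_mul]
  refine ⟨hmain, ?_⟩
  simp only [FD]
  rw [hmain]
  ring
end

section
/- Let z₃, z_j, z_m be real numbers with z₃ < 0 < z_j < z_m and z_j < 1. Set x₁ := z_j·(1−z₃)/(z_j−z₃), x₂ := z_j·(z_m−z₃)/(z_m·(z_j−z₃)), x₃ := z_j/(z_j−z₃) (so that x₁, x₂, x₃ < 1). Then F_D(1/2, 1, 1/2, −1/2, 3/2; x₁, x₂, x₃) = (−z₃/(1−z₃)) · F_D(1/2, 1, 1/2, 1/2, 3/2; x₁, x₂, x₃) + (1/(1−z₃)) · F₁(1/2, 1/2, 1/2, 3/2; x₂, x₃). -/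
open MeasureTheory

/-- Appell's first hypergeometric function of two variables,
in its Euler integral form. -/
noncomputable def F1 (a b b' c x y : ℝ) : ℝ :=
  (Real.Gamma c / (Real.Gamma a * Real.Gamma (c - a))) *
    ∫ u in (0:ℝ)..1, u ^ (a - 1) * (1 - u) ^ (c - a - 1) *
      (1 - u * x) ^ (-b) * (1 - u * y) ^ (-b')

lemma one_sub_mul_pos {u x : ℝ} (hu : 0 ≤ u) (hu1 : u ≤ 1) (hx : x < 1) :
    0 < 1 - u * x := by
  rcases le_or_gt x 0 with h | h
  · have := mul_nonpos_of_nonneg_of_nonpos hu h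
    linarith
  · have : u * x ≤ x := mul_le_of_le_one_left h.le hu1
    linarith

lemma contOn_factor {x : ℝ} (hx : x < 1) (p : ℝ) :
    ContinuousOn (fun u : ℝ => (1 - u * x) ^ p) (Set.uIcc (0:ℝ) 1) := by
  apply ContinuousOn.rpow_const (by fun_prop)
  intro u hu
  rw [Set.uIcc_of_le (by norm_num)] at hu
  exact Or.inl (one_sub_mul_pos hu.1 hu.2 hx).ne'

theorem FD_reduction_prop3 (z₃ zj zm : ℝ)
    (h₃ : z₃ < 0) (h0 : 0 < zj) (hjm : zj < zm) (hj1 : zj < 1)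
    (x₁ x₂ x₃ : ℝ)
    (hx₁ : x₁ = zj * (1 - z₃) / (zj - z₃))
    (hx₂ : x₂ = zj * (zm - z₃) / (zm * (zj - z₃)))
    (hx₃ : x₃ = zj / (zj - z₃)) :
    FD (1/2) 1 (1/2) (-(1/2)) (3/2) x₁ x₂ x₃ =
      (-z₃ / (1 - z₃)) * FD (1/2) 1 (1/2) (1/2) (3/2) x₁ x₂ x₃ +
      (1 / (1 - z₃)) * F1 (1/2) (1/2) (1/2) (3/2) x₂ x₃ := by
  have hj3 : (0:ℝ) < zj - z₃ := by linarith
  have hz : (0:ℝ) < 1 - z₃ := by linarith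
  have hm : (0:ℝ) < zm := lt_trans h0 hjm
  have hx1lt : x₁ < 1 := by
    rw [hx₁, div_lt_one hj3]; nlinarith [mul_pos (neg_pos.mpr h₃) (by linarith : (0:ℝ) < 1 - zj)]
  have hx2lt : x₂ < 1 := by
    rw [hx₂, div_lt_one (mul_pos hm hj3)]
    nlinarith [mul_pos (neg_pos.mpr h₃) (sub_pos.mpr hjm)]
  have hx3lt : x₃ < 1 := by
    rw [hx₃, div_lt_one hj3]; linarith
  have hkey : x₁ = (1 - z₃) * x₃ := by
    rw [hx₁, hx₃]; ring
  -- the three integrands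
  set F : ℝ → ℝ := fun u => u ^ ((1:ℝ)/2 - 1) * (1 - u) ^ ((3:ℝ)/2 - 1/2 - 1) *
      (1 - u * x₁) ^ (-(1:ℝ)) * (1 - u * x₂) ^ (-((1:ℝ)/2)) * (1 - u * x₃) ^ (-(-((1:ℝ)/2))) with hF
  set G : ℝ → ℝ := fun u => u ^ ((1:ℝ)/2 - 1) * (1 - u) ^ ((3:ℝ)/2 - 1/2 - 1) *
      (1 - u * x₁) ^ (-(1:ℝ)) * (1 - u * x₂) ^ (-((1:ℝ)/2)) * (1 - u * x₃) ^ (-((1:ℝ)/2)) with hG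
  set H : ℝ → ℝ := fun u => u ^ ((1:ℝ)/2 - 1) * (1 - u) ^ ((3:ℝ)/2 - 1/2 - 1) *
      (1 - u * x₂) ^ (-((1:ℝ)/2)) * (1 - u * x₃) ^ (-((1:ℝ)/2)) with hH
  have hGi : IntervalIntegrable G volume 0 1 := by
    have : G = fun u : ℝ => (fun v : ℝ => v ^ ((1:ℝ)/2 - 1)) u *
        ((1 - u) ^ ((3:ℝ)/2 - 1/2 - 1) * (1 - u * x₁) ^ (-(1:ℝ)) *
          (1 - u * x₂) ^ (-((1:ℝ)/2)) * (1 - u * x₃) ^ (-((1:ℝ)/2))) := by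
      funext u; simp [hG]; ring
    rw [this]
    apply (intervalIntegral.intervalIntegrable_rpow' (by norm_num)).mul_continuousOn
    have h1 : ContinuousOn (fun u : ℝ => (1 - u) ^ ((3:ℝ)/2 - 1/2 - 1)) (Set.uIcc (0:ℝ) 1) := by
      apply ContinuousOn.rpow_const (by fun_prop)
      intro u _; right; norm_num
    exact ((h1.mul (contOn_factor hx1lt _)).mul (contOn_factor hx2lt _)).mul (contOn_factor hx3lt _)
  have hHi : IntervalIntegrable H volume 0 1 := by
    have : H = fun u : ℝ => (fun v : ℝ => v ^ ((1:ℝ)/2 - 1)) u *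
        ((1 - u) ^ ((3:ℝ)/2 - 1/2 - 1) *
          (1 - u * x₂) ^ (-((1:ℝ)/2)) * (1 - u * x₃) ^ (-((1:ℝ)/2))) := by
      funext u; simp [hH]; ring
    rw [this]
    apply (intervalIntegral.intervalIntegrable_rpow' (by norm_num)).mul_continuousOn
    have h1 : ContinuousOn (fun u : ℝ => (1 - u) ^ ((3:ℝ)/2 - 1/2 - 1)) (Set.uIcc (0:ℝ) 1) := by
      apply ContinuousOn.rpow_const (by fun_prop)
      intro u _; right; norm_num
    exact (h1.mul (contOn_factor hx2lt _)).mul (contOn_factor hx3lt _)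
  have hident : Set.EqOn F
      (fun u => (-z₃ / (1 - z₃)) * G u + (1 / (1 - z₃)) * H u) (Set.uIcc (0:ℝ) 1) := by
    intro u hu
    rw [Set.uIcc_of_le (by norm_num)] at hu
    have hA : 0 < 1 - u * x₁ := one_sub_mul_pos hu.1 hu.2 hx1lt
    have hC : 0 < 1 - u * x₃ := one_sub_mul_pos hu.1 hu.2 hx3lt
    have hAC : 1 - u * x₁ = z₃ + (1 - z₃) * (1 - u * x₃) := by
      rw [hkey]; ring
    simp only [hF, hG, hH]
    rw [show (-(-((1:ℝ)/2))) = 1 + (-((1:ℝ)/2)) by norm_num,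
      Real.rpow_add hC, Real.rpow_one, Real.rpow_neg_one]
    rw [hAC]
    have hne : z₃ + (1 - z₃) * (1 - u * x₃) ≠ 0 := by rw [← hAC]; exact hA.ne'
    field_simp
    ring
  have hint : (∫ u in (0:ℝ)..1, F u) =
      (-z₃ / (1 - z₃)) * (∫ u in (0:ℝ)..1, G u) + (1 / (1 - z₃)) * (∫ u in (0:ℝ)..1, H u) := by
    rw [intervalIntegral.integral_congr hident,
      intervalIntegral.integral_add (hGi.const_mul _) (hHi.const_mul _),
      intervalIntegral.integral_const_mul, intervalIntegral.integral_const_mul]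
  simp only [hF, hG, hH] at hint
  simp only [FD, F1]
  rw [hint]
  ring
end

section
/- Let m ≥ 1, let α, γ be real with 0 < α < γ, let β₁, …, β_m be real, and let z₁, …, z_m ∈ ℝ with |z_j| < 1 for every j. Then the Euler integral equals the Lauricella series: ∫₀¹ t^(α−1)·(1−t)^(γ−α−1)·∏_{j=1}^m (1−z_j·t)^(−β_j) dt = (Γ(α)·Γ(γ−α)/Γ(γ)) · Σ_{(n₁,…,n_m)∈ℕ^m} ((α)_{n₁+⋯+n_m}·(β₁)_{n₁}⋯(β_m)_{n_m}) / ((γ)_{n₁+⋯+n_m}·n₁!⋯n_m!) · z₁^{n₁}⋯z_m^{n_m}. -/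
open MeasureTheory Finset

/-- The Pochhammer symbol `(q)_k = q·(q+1)⋯(q+k−1)`, with `(q)_0 = 1`. -/
noncomputable def poch (q : ℝ) (k : ℕ) : ℝ := ∏ i ∈ Finset.range k, (q + (i : ℝ))

lemma poch_zero (q : ℝ) : poch q 0 = 1 := by simp [poch]

lemma poch_succ (q : ℝ) (k : ℕ) : poch q (k + 1) = poch q k * (q + k) :=
  Finset.prod_range_succ _ _

lemma poch_nonneg {q : ℝ} (hq : 0 ≤ q) (k : ℕ) : 0 ≤ poch q k :=
  Finset.prod_nonneg fun i _ => by positivity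

lemma poch_pos {q : ℝ} (hq : 0 < q) (k : ℕ) : 0 < poch q k :=
  Finset.prod_pos fun i _ => by positivity

lemma abs_poch_le (q : ℝ) (k : ℕ) : |poch q k| ≤ poch |q| k := by
  rw [poch, poch, Finset.abs_prod]
  refine Finset.prod_le_prod (fun i _ => abs_nonneg _) fun i _ => ?_
  calc |q + (i:ℝ)| ≤ |q| + |(i:ℝ)| := abs_add_le _ _
    _ = |q| + i := by rw [Nat.abs_cast]

lemma poch_le_poch {a b : ℝ} (hab : a ≤ b) (ha : 0 ≤ a) (k : ℕ) : poch a k ≤ poch b k :=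
  Finset.prod_le_prod (fun i _ => by positivity) fun i _ => by linarith

/-- Ratio-test summability of the binomial coefficients against a geometric factor. -/
lemma summable_poch_mul_pow (b x : ℝ) (hx : |x| < 1) :
    Summable fun k : ℕ => poch b k / (k.factorial : ℝ) * x ^ k := by
  set l : ℝ := (1 + |x|) / 2 with hl
  have hx0 : (0:ℝ) ≤ |x| := abs_nonneg x
  have hl1 : l < 1 := by rw [hl]; linarith
  have hlx : |x| < l := by rw [hl]; linarith
  refine summable_of_ratio_norm_eventually_le hl1 ?_
  have hK := Nat.le_ceil ((|b| * |x|) / (l - |x|))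
  refine Filter.eventually_atTop.2 ⟨⌈(|b| * |x|) / (l - |x|)⌉₊, fun k hk => ?_⟩
  have hkK : ((|b| * |x|) / (l - |x|)) ≤ (k : ℝ) := hK.trans (by exact_mod_cast hk)
  have hlxpos : (0:ℝ) < l - |x| := by linarith
  have hbk : |b| * |x| ≤ (k:ℝ) * (l - |x|) := by
    rw [div_le_iff₀ hlxpos] at hkK; linarith
  have key : |b + k| * |x| ≤ (k + 1 : ℝ) * l := by
    have h1 : |b + (k:ℝ)| ≤ |b| + k := (abs_add_le _ _).trans (by rw [Nat.abs_cast])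
    have h2 : |b + (k:ℝ)| * |x| ≤ (|b| + k) * |x| := by
      apply mul_le_mul_of_nonneg_right h1 hx0
    have h3 : (|b| + k) * |x| = |b| * |x| + k * |x| := by ring
    nlinarith [hx0, hlx]
  have hfact : ((k+1).factorial : ℝ) = (k.factorial : ℝ) * (k+1) := by
    rw [Nat.factorial_succ]; push_cast; ring
  have hnorm : ‖poch b (k+1) / ((k+1).factorial : ℝ) * x ^ (k+1)‖
      = ‖poch b k / (k.factorial : ℝ) * x ^ k‖ * (|b + k| * |x| / (k+1)) := by
    rw [Real.norm_eq_abs, Real.norm_eq_abs, poch_succ, pow_succ, hfact]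
    simp only [abs_mul, abs_div]
    rw [abs_of_pos (show (0:ℝ) < (k:ℝ)+1 by positivity),
      abs_of_pos (show (0:ℝ) < (k.factorial : ℝ) by positivity)]
    have hf0 : (k.factorial : ℝ) ≠ 0 := by positivity
    field_simp
  rw [hnorm]
  have hk1 : (0:ℝ) < (k:ℝ) + 1 := by positivity
  calc ‖poch b k / (k.factorial : ℝ) * x ^ k‖ * (|b + k| * |x| / (k+1))
      ≤ ‖poch b k / (k.factorial : ℝ) * x ^ k‖ * l := by
        apply mul_le_mul_of_nonneg_left _ (norm_nonneg _)
        rw [div_le_iff₀ hk1]; linarith [key]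
    _ = l * ‖poch b k / (k.factorial : ℝ) * x ^ k‖ := mul_comm _ _

lemma summable_poch_deriv (b y : ℝ) (hy : |y| < 1) :
    Summable fun k : ℕ => poch b k / (k.factorial : ℝ) * ((k : ℝ) * y ^ (k - 1)) := by
  set l : ℝ := (1 + |y|) / 2 with hl
  have hy0 : (0:ℝ) ≤ |y| := abs_nonneg y
  have hl1 : l < 1 := by rw [hl]; linarith
  have hly : |y| < l := by rw [hl]; linarith
  have hlpos : (0:ℝ) < l - |y| := by linarith
  refine summable_of_ratio_norm_eventually_le hl1 ?_
  have hK := Nat.le_ceil ((|b| * |y|) / (l - |y|))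
  refine Filter.eventually_atTop.2 ⟨max 1 ⌈(|b| * |y|) / (l - |y|)⌉₊, fun k hk => ?_⟩
  have hk1 : 1 ≤ k := le_trans (le_max_left _ _) hk
  have hkK : ((|b| * |y|) / (l - |y|)) ≤ (k : ℝ) :=
    hK.trans (by exact_mod_cast le_trans (le_max_right _ _) hk)
  have hbk : |b| * |y| ≤ (k:ℝ) * (l - |y|) := by
    rw [div_le_iff₀ hlpos] at hkK; linarith
  have hineq : |b + (k:ℝ)| * |y| ≤ l * k := by
    have h1 : |b + (k:ℝ)| ≤ |b| + k := (abs_add_le _ _).trans (by rw [Nat.abs_cast])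
    nlinarith [abs_nonneg (b + (k:ℝ)), hy0]
  set A : ℝ := |poch b k| / (k.factorial : ℝ) with hA
  have hA0 : 0 ≤ A := by positivity
  have hfk : ‖poch b k / (k.factorial : ℝ) * ((k : ℝ) * y ^ (k - 1))‖
      = A * ((k:ℝ) * |y| ^ (k - 1)) := by
    rw [Real.norm_eq_abs]
    simp [abs_mul, abs_div, abs_pow, Nat.abs_cast, hA]
  have hfk1 : ‖poch b (k+1) / ((k+1).factorial : ℝ) * (((k+1) : ℕ) : ℝ) * y ^ ((k+1) - 1)‖
      = A * (|b + k| * |y| ^ k) := by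
    rw [Real.norm_eq_abs, Nat.add_sub_cancel, poch_succ, Nat.factorial_succ]
    push_cast
    rw [abs_mul, abs_mul, abs_div, abs_mul, abs_mul, abs_pow,
      abs_of_pos (show (0:ℝ) < (k.factorial:ℝ) by positivity),
      abs_of_pos (show (0:ℝ) < (k:ℝ)+1 by positivity)]
    have hf0 : (k.factorial : ℝ) ≠ 0 := by positivity
    have hk0 : ((k:ℝ)+1) ≠ 0 := by positivity
    rw [hA]
    field_simp
  have hpow : |y| ^ k = |y| ^ (k - 1) * |y| := by
    conv_lhs => rw [show k = (k - 1) + 1 from (Nat.succ_pred_eq_of_pos hk1).symm]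
    rw [pow_succ]
  calc ‖poch b (k+1) / ((k+1).factorial : ℝ) * (((k+1):ℕ) * y ^ ((k+1) - 1))‖
      = ‖poch b (k+1) / ((k+1).factorial : ℝ) * (((k+1) : ℕ) : ℝ) * y ^ ((k+1) - 1)‖ := by
        rw [mul_assoc]
    _ = A * (|b + k| * |y| ^ k) := hfk1
    _ ≤ l * (A * ((k:ℝ) * |y| ^ (k - 1))) := by
        rw [hpow]
        nlinarith [pow_nonneg hy0 (k-1), hA0, mul_le_mul_of_nonneg_left hineq
          (mul_nonneg hA0 (pow_nonneg hy0 (k-1)))]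
    _ = l * ‖poch b k / (k.factorial : ℝ) * ((k : ℝ) * y ^ (k - 1))‖ := by rw [hfk]

lemma hasSum_binomial (b x : ℝ) (hx : |x| < 1) :
    HasSum (fun k : ℕ => poch b k / (k.factorial : ℝ) * x ^ k) ((1 - x) ^ (-b)) := by
  set g : ℕ → ℝ → ℝ := fun k y => poch b k / (k.factorial : ℝ) * y ^ k with hgdef
  set g' : ℕ → ℝ → ℝ := fun k y => poch b k / (k.factorial : ℝ) * ((k : ℝ) * y ^ (k - 1))
    with hg'def
  set S : ℝ → ℝ := fun y => ∑' k, g k y with hSdef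
  set D : ℝ → ℝ := fun y => ∑' k, g' k y with hDdef
  set r : ℝ := (|x| + 1) / 2 with hrdef
  have hx0 : (0:ℝ) ≤ |x| := abs_nonneg x
  have hr1 : r < 1 := by rw [hrdef]; linarith
  have hxr : |x| < r := by rw [hrdef]; linarith
  have hr0 : (0:ℝ) < r := by rw [hrdef]; linarith
  set t : Set ℝ := Set.Ioo (-r) r with htdef
  have ht : IsOpen t := isOpen_Ioo
  have h't : IsPreconnected t := (convex_Ioo _ _).isPreconnected
  have h0t : (0:ℝ) ∈ t := by constructor <;> [linarith; linarith]
  have hxt : x ∈ t := abs_lt.1 hxr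
  have habs : ∀ y ∈ t, |y| < 1 := fun y hy =>
    lt_trans (abs_lt.2 ⟨by linarith [hy.1], by linarith [hy.2]⟩) hr1
  -- summable bound for derivatives
  have hrabs : |r| < 1 := by rwa [abs_of_pos hr0]
  have hu : Summable fun k : ℕ => |poch b k / (k.factorial : ℝ)| * ((k : ℝ) * r ^ (k-1)) := by
    have := (summable_poch_deriv b r hrabs).abs
    refine this.congr fun k => ?_
    rw [abs_mul, abs_mul, abs_pow, Nat.abs_cast, abs_of_pos hr0]
  have hg : ∀ k y, y ∈ t → HasDerivAt (g k) (g' k y) y := fun k y _ =>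
    (hasDerivAt_pow k y).const_mul _
  have hg' : ∀ k y, y ∈ t → ‖g' k y‖ ≤ |poch b k / (k.factorial : ℝ)| * ((k : ℝ) * r ^ (k-1)) := by
    intro k y hy
    have hyr : |y| ≤ r := le_of_lt (abs_lt.2 ⟨by linarith [hy.1], by linarith [hy.2]⟩)
    simp only [hg'def, Real.norm_eq_abs, abs_mul, abs_pow, Nat.abs_cast]
    have hp : |y| ^ (k-1) ≤ r ^ (k-1) := pow_le_pow_left₀ (abs_nonneg y) hyr _
    have h2 : (k:ℝ) * |y|^(k-1) ≤ (k:ℝ) * r^(k-1) :=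
      mul_le_mul_of_nonneg_left hp (by positivity)
    exact mul_le_mul_of_nonneg_left h2 (abs_nonneg _)
  have hg0 : Summable fun k => g k 0 := summable_poch_mul_pow b 0 (by norm_num)
  have hS' : ∀ y ∈ t, HasDerivAt S (D y) y := fun y hy =>
    hasDerivAt_tsum_of_isPreconnected hu ht h't hg hg' h0t hg0 hy
  -- the ODE
  have hkey : ∀ y ∈ t, (1 - y) * D y = b * S y := by
    intro y hy
    have hy1 : |y| < 1 := habs y hy
    have sumS := summable_poch_mul_pow b y hy1
    have sumD := summable_poch_deriv b y hy1
    have h1 : D y = ∑' k, ((b + k) * (poch b k / (k.factorial : ℝ))) * y ^ k := by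
      rw [hDdef]
      simp only
      rw [Summable.tsum_eq_zero_add sumD]
      simp only [Nat.cast_zero, zero_mul, mul_zero, zero_add]
      refine tsum_congr fun k => ?_
      simp only [Nat.add_sub_cancel, poch_succ, Nat.factorial_succ]
      have hf0 : (k.factorial : ℝ) ≠ 0 := by positivity
      have hk0 : ((k:ℝ)+1) ≠ 0 := by positivity
      push_cast
      field_simp
    have h2 : ∀ k : ℕ, ((b + k) * (poch b k / (k.factorial : ℝ))) * y ^ k
        = b * g k y + g' k y * y := by
      intro k
      rcases Nat.eq_zero_or_pos k with hk | hk
      · subst hk; simp [hgdef, hg'def]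
      · have hyk : y ^ k = y ^ (k-1) * y := by
          conv_lhs => rw [show k = (k - 1) + 1 from (Nat.succ_pred_eq_of_pos hk).symm]
          rw [pow_succ]
        rw [hgdef, hg'def]
        simp only
        rw [hyk]
        push_cast
        ring
    have h3 : D y = b * S y + D y * y := by
      conv_lhs => rw [h1, tsum_congr h2,
        Summable.tsum_add (sumS.mul_left b) (sumD.mul_right y), tsum_mul_left, tsum_mul_right]
    linear_combination h3
  -- h is constant
  set h : ℝ → ℝ := fun y => S y * (1 - y) ^ b with hhdef
  have hh : ∀ y ∈ t, HasDerivAt h 0 y := by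
    intro y hy
    have hy1 : (0:ℝ) < 1 - y := by linarith [hy.2, hr1]
    have d1 : HasDerivAt (fun w : ℝ => 1 - w) (-1) y := (hasDerivAt_id y).const_sub 1
    have d2 : HasDerivAt (fun w : ℝ => (1 - w) ^ b) (b * (1 - y) ^ (b - 1) * -1) y := by
      have := d1.rpow_const (p := b) (Or.inl (ne_of_gt hy1))
      simpa using this
    have combined := (hS' y hy).mul d2
    have e : (1 - y) ^ b = (1 - y) ^ (b - 1) * (1 - y) := by
      rw [← Real.rpow_add_one (ne_of_gt hy1) (b-1)]
      norm_num
    have hval : D y * (1 - y) ^ b + S y * (b * (1 - y) ^ (b - 1) * -1) = 0 := by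
      rw [e]
      linear_combination (1 - y) ^ (b - 1) * (hkey y hy)
    exact hval ▸ combined
  have hconst : h x = h 0 := by
    rcases le_or_gt 0 x with hx' | hx'
    · have hsub : Set.Icc (0:ℝ) x ⊆ t := fun w hw =>
        ⟨by linarith [hw.1], by linarith [hw.2, hxt.2]⟩
      exact constant_of_has_deriv_right_zero
        (fun w hw => ((hh w (hsub hw)).continuousAt).continuousWithinAt)
        (fun w hw => ((hh w (hsub (Set.mem_Icc.2 ⟨hw.1, le_of_lt hw.2⟩))).hasDerivWithinAt))
        x (Set.mem_Icc.2 ⟨hx', le_refl x⟩)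
    · have hsub : Set.Icc x (0:ℝ) ⊆ t := fun w hw =>
        ⟨by linarith [hw.1, hxt.1], by linarith [hw.2]⟩
      exact (constant_of_has_deriv_right_zero
        (fun w hw => ((hh w (hsub hw)).continuousAt).continuousWithinAt)
        (fun w hw => ((hh w (hsub (Set.mem_Icc.2 ⟨hw.1, le_of_lt hw.2⟩))).hasDerivWithinAt))
        0 (Set.mem_Icc.2 ⟨le_of_lt hx', le_refl 0⟩)).symm
  have hS0 : S 0 = 1 := by
    rw [hSdef]
    simp only
    rw [tsum_eq_single 0 (fun k hk => by simp [hgdef, zero_pow hk])]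
    simp [hgdef, poch_zero]
  have hh0 : h 0 = 1 := by rw [hhdef]; simp [hS0]
  have h1x : (0:ℝ) < 1 - x := by have := (abs_lt.1 hx).2; linarith
  have hSx : S x * (1 - x) ^ b = 1 := by rw [← hconst] at hh0; exact hh0
  have hfin : S x = (1 - x) ^ (-b) := by
    rw [Real.rpow_neg (le_of_lt h1x)]
    have hne : (1 - x) ^ b ≠ 0 := ne_of_gt (Real.rpow_pos_of_pos h1x b)
    field_simp
    linarith [hSx]
  rw [(summable_poch_mul_pow b x hx).hasSum_iff]
  exact hfin

def finSuccFunEquiv (m : ℕ) : (Fin (m + 1) → ℕ) ≃ ℕ × (Fin m → ℕ) where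
  toFun n := (n 0, fun j => n j.succ)
  invFun p := Fin.cons p.1 p.2
  left_inv n := by
    funext j
    refine Fin.cases ?_ (fun i => ?_) j <;> simp
  right_inv p := by
    ext j <;> simp

set_option maxHeartbeats 1000000 in
lemma hasSum_pi_prod : ∀ (m : ℕ) (g : Fin m → ℕ → ℝ),
    (∀ j, Summable fun k => |g j k|) →
    HasSum (fun n : Fin m → ℕ => ∏ j, g j (n j)) (∏ j, ∑' k, g j k) := by
  intro m
  induction m with
  | zero =>
    intro g _
    have h := hasSum_single (f := fun n : Fin 0 → ℕ => ∏ j, g j (n j))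
      (fun _ => 0) (fun b' hb' => absurd (Subsingleton.elim b' _) hb')
    simpa using h
  | succ m IH =>
    intro g hg
    have hrest : HasSum (fun n : Fin m → ℕ => ∏ j, g j.succ (n j))
        (∏ j : Fin m, ∑' k, g j.succ k) := IH _ (fun j => hg j.succ)
    have habs : HasSum (fun n : Fin m → ℕ => ∏ j, |g j.succ (n j)|)
        (∏ j : Fin m, ∑' k, |g j.succ k|) :=
      IH (fun j k => |g j.succ k|) (fun j => (hg j.succ).congr fun k => (abs_abs _).symm)
    have h0 : HasSum (g 0) (∑' k, g 0 k) := (hg 0).of_abs.hasSum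
    have hsum2 : Summable fun n : Fin m → ℕ => ‖∏ j, g j.succ (n j)‖ := by
      refine habs.summable.congr fun n => ?_
      rw [Real.norm_eq_abs, Finset.abs_prod]
    have hsum1 : Summable fun k => ‖g 0 k‖ := (hg 0).congr fun k => (Real.norm_eq_abs _).symm
    have hs : Summable fun p : ℕ × (Fin m → ℕ) => g 0 p.1 * ∏ j, g j.succ (p.2 j) :=
      by apply summable_mul_of_summable_norm hsum1 hsum2
    have hmul : HasSum (fun p : ℕ × (Fin m → ℕ) => g 0 p.1 * ∏ j, g j.succ (p.2 j))
        ((∑' k, g 0 k) * ∏ j : Fin m, ∑' k, g j.succ k) := by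
      apply h0.mul hrest hs
    have hcomp := (finSuccFunEquiv m).hasSum_iff.2 hmul
    have heq : ((fun p : ℕ × (Fin m → ℕ) => g 0 p.1 * ∏ j, g j.succ (p.2 j)) ∘ (finSuccFunEquiv m))
        = fun n : Fin (m+1) → ℕ => ∏ j, g j (n j) := by
      funext n
      simp only [Function.comp_apply, finSuccFunEquiv, Equiv.coe_fn_mk]
      rw [Fin.prod_univ_succ]
    rw [heq] at hcomp
    rw [Fin.prod_univ_succ]
    exact hcomp

lemma Gamma_add_nat {x : ℝ} (hx : 0 < x) (N : ℕ) :
    Real.Gamma (x + N) = poch x N * Real.Gamma x := by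
  induction N with
  | zero => simp [poch_zero]
  | succ N IH =>
    have hxN : x + (N:ℝ) ≠ 0 := by positivity
    have h : (x + ((N+1 : ℕ):ℝ)) = (x + N) + 1 := by push_cast; ring
    rw [h, Real.Gamma_add_one hxN, IH, poch_succ]; ring

lemma complex_eq_real_on (u v : ℝ) {t : ℝ} (ht0 : 0 ≤ t) (ht1 : t ≤ 1) :
    (t:ℂ) ^ ((u:ℂ) - 1) * (1 - (t:ℂ)) ^ ((v:ℂ) - 1)
      = ((t ^ (u - 1) * (1 - t) ^ (v - 1) : ℝ) : ℂ) := by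
  have h1 : ((u:ℂ) - 1) = ((u - 1 : ℝ) : ℂ) := by push_cast; ring
  have h2 : ((v:ℂ) - 1) = ((v - 1 : ℝ) : ℂ) := by push_cast; ring
  have h3 : (1 - (t:ℂ)) = ((1 - t : ℝ) : ℂ) := by push_cast; ring
  rw [h1, h2, h3, ← Complex.ofReal_cpow ht0, ← Complex.ofReal_cpow (by linarith), Complex.ofReal_mul]

lemma betaIntegrand_integrableOn {u v : ℝ} (hu : 0 < u) (hv : 0 < v) :
    IntegrableOn (fun t : ℝ => t ^ (u - 1) * (1 - t) ^ (v - 1)) (Set.Ioc 0 1) := by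
  have hc := Complex.betaIntegral_convergent (u := (u:ℂ)) (v := (v:ℂ)) (by simpa) (by simpa)
  have h1 : IntegrableOn (fun t : ℝ => (t:ℂ) ^ ((u:ℂ) - 1) * (1 - (t:ℂ)) ^ ((v:ℂ) - 1))
      (Set.Ioc (0:ℝ) 1) := hc.1
  have h2 : IntegrableOn (fun t : ℝ => ((t:ℂ) ^ ((u:ℂ) - 1) * (1 - (t:ℂ)) ^ ((v:ℂ) - 1)).re)
      (Set.Ioc (0:ℝ) 1) := h1.re
  refine h2.congr_fun (fun t ht => ?_) measurableSet_Ioc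
  dsimp only
  rw [complex_eq_real_on u v (le_of_lt ht.1) ht.2, Complex.ofReal_re]

lemma betaIntegral_real {u v : ℝ} (hu : 0 < u) (hv : 0 < v) :
    ∫ t in Set.Ioc (0:ℝ) 1, t ^ (u - 1) * (1 - t) ^ (v - 1)
      = Real.Gamma u * Real.Gamma v / Real.Gamma (u + v) := by
  have key := Complex.Gamma_mul_Gamma_eq_betaIntegral (s := (u:ℂ)) (t := (v:ℂ))
    (by simpa) (by simpa)
  have h2 : Complex.betaIntegral u v
      = ((∫ t in Set.Ioc (0:ℝ) 1, t ^ (u - 1) * (1 - t) ^ (v - 1) : ℝ) : ℂ) := by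
    rw [Complex.betaIntegral, intervalIntegral.integral_of_le zero_le_one]
    have : ∀ g : ℝ → ℝ, ((∫ t in Set.Ioc (0:ℝ) 1, g t : ℝ) : ℂ)
        = ∫ t in Set.Ioc (0:ℝ) 1, ((g t : ℝ) : ℂ) := fun g => (integral_ofReal (𝕜 := ℂ)).symm
    rw [this]
    exact setIntegral_congr_fun measurableSet_Ioc fun t ht =>
      complex_eq_real_on u v (le_of_lt ht.1) ht.2
  rw [h2] at key
  have huv : ((u:ℂ) + (v:ℂ)) = ((u + v : ℝ) : ℂ) := by push_cast; ring
  rw [huv, Complex.Gamma_ofReal, Complex.Gamma_ofReal, Complex.Gamma_ofReal] at key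
  have key2 : Real.Gamma u * Real.Gamma v
      = Real.Gamma (u + v) * ∫ t in Set.Ioc (0:ℝ) 1, t ^ (u - 1) * (1 - t) ^ (v - 1) := by
    exact_mod_cast key
  have hpos : Real.Gamma (u + v) ≠ 0 := ne_of_gt (Real.Gamma_pos_of_pos (by linarith))
  field_simp
  linarith [key2]

lemma summable_abs_poch_mul_pow (b x : ℝ) (hx : |x| < 1) :
    Summable fun k : ℕ => |poch b k / (k.factorial : ℝ) * x ^ k| := by
  refine Summable.of_nonneg_of_le (fun k => abs_nonneg _) (fun k => ?_)
    (summable_poch_mul_pow |b| |x| (by rwa [abs_abs]))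
  rw [abs_mul, abs_div, abs_pow, Nat.abs_cast]
  have h1 : |poch b k| / (k.factorial : ℝ) ≤ poch |b| k / (k.factorial : ℝ) := by
    apply div_le_div_of_nonneg_right (abs_poch_le b k) ?_ |>.trans_eq rfl
    · positivity
  exact mul_le_mul_of_nonneg_right h1 (pow_nonneg (abs_nonneg x) k)

theorem lauricella_euler_integral_eq_series (m : ℕ) (hm : 1 ≤ m)
    (α γ : ℝ) (hα : 0 < α) (hαγ : α < γ) (β : Fin m → ℝ) (z : Fin m → ℝ)
    (hz : ∀ j, |z j| < 1) :
    (∫ t in (0:ℝ)..1, t ^ (α - 1) * (1 - t) ^ (γ - α - 1) *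
        ∏ j, (1 - z j * t) ^ (-(β j))) =
      (Real.Gamma α * Real.Gamma (γ - α) / Real.Gamma γ) *
        ∑' n : Fin m → ℕ,
          (poch α (∑ j, n j) * ∏ j, poch (β j) (n j)) /
            (poch γ (∑ j, n j) * ∏ j, ((n j).factorial : ℝ)) *
            ∏ j, (z j) ^ (n j) := by
  have hγα : (0:ℝ) < γ - α := by linarith
  have hγ : (0:ℝ) < γ := by linarith
  set B0 : ℝ := Real.Gamma α * Real.Gamma (γ - α) / Real.Gamma γ with hB0
  have hB0pos : 0 < B0 := by
    rw [hB0]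
    have := Real.Gamma_pos_of_pos hα
    have := Real.Gamma_pos_of_pos hγα
    have := Real.Gamma_pos_of_pos hγ
    positivity
  set N : (Fin m → ℕ) → ℕ := fun n => ∑ j, n j with hN
  set c : (Fin m → ℕ) → ℝ :=
    fun n => ∏ j, (poch (β j) (n j) / ((n j).factorial : ℝ) * z j ^ (n j)) with hc
  set G : (Fin m → ℕ) → ℝ → ℝ := fun n t => t ^ (α - 1) * (1 - t) ^ (γ - α - 1) *
    ∏ j, (poch (β j) (n j) / ((n j).factorial : ℝ) * (z j * t) ^ (n j)) with hG
  -- beta-type integrals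
  have haux : ∀ k : ℕ, (∫ t in Set.Ioc (0:ℝ) 1, t ^ (α + k - 1) * (1 - t) ^ (γ - α - 1))
      = poch α k / poch γ k * B0 := by
    intro k
    have hu : (0:ℝ) < α + k := by positivity
    have h := betaIntegral_real (u := α + k) (v := γ - α) hu hγα
    rw [show α + (k:ℝ) + (γ - α) = γ + k by ring, Gamma_add_nat hα, Gamma_add_nat hγ] at h
    rw [h]
    have h1 : poch γ k ≠ 0 := ne_of_gt (poch_pos hγ k)
    have h2 : Real.Gamma γ ≠ 0 := ne_of_gt (Real.Gamma_pos_of_pos hγ)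
    rw [hB0]
    field_simp
  have hauxpos : ∀ k : ℕ, 0 ≤ poch α k / poch γ k * B0 := fun k => by
    have := poch_pos hα k; have := poch_pos hγ k; positivity
  have hauxle : ∀ k : ℕ, poch α k / poch γ k * B0 ≤ B0 := by
    intro k
    have h1 := poch_pos hγ k
    have h2 : poch α k / poch γ k ≤ 1 :=
      (div_le_one h1).2 (poch_le_poch (le_of_lt hαγ) (le_of_lt hα) k)
    nlinarith [hB0pos]
  -- summability of the coefficients
  have habsg : ∀ j, Summable fun k => |poch (β j) k / (k.factorial : ℝ) * z j ^ k| :=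
    fun j => summable_abs_poch_mul_pow (β j) (z j) (hz j)
  have habsC : Summable fun n : Fin m → ℕ =>
      ∏ j, |poch (β j) (n j) / ((n j).factorial : ℝ) * z j ^ (n j)| := by
    exact (hasSum_pi_prod m (fun j k => |poch (β j) k / (k.factorial : ℝ) * z j ^ k|)
      (fun j => (habsg j).congr fun k => (abs_abs _).symm)).summable
  have habsc : ∀ n, |c n| = ∏ j, |poch (β j) (n j) / ((n j).factorial : ℝ) * z j ^ (n j)| :=
    fun n => Finset.abs_prod _ _
  -- pointwise identity of G with the beta integrand
  have heq : ∀ n, ∀ t ∈ Set.Ioc (0:ℝ) 1,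
      G n t = c n * (t ^ (α + (N n : ℝ) - 1) * (1 - t) ^ (γ - α - 1)) := by
    intro n t ht
    have hprod : (∏ j, (poch (β j) (n j) / ((n j).factorial : ℝ) * (z j * t) ^ (n j)))
        = c n * t ^ (N n) := by
      calc (∏ j, (poch (β j) (n j) / ((n j).factorial : ℝ) * (z j * t) ^ (n j)))
          = ∏ j, ((poch (β j) (n j) / ((n j).factorial : ℝ) * z j ^ (n j)) * t ^ (n j)) := by
            refine Finset.prod_congr rfl fun j _ => ?_
            rw [mul_pow]; ring
        _ = (∏ j, (poch (β j) (n j) / ((n j).factorial : ℝ) * z j ^ (n j)))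
              * ∏ j, t ^ (n j) := Finset.prod_mul_distrib
        _ = c n * t ^ (N n) := by rw [Finset.prod_pow_eq_pow_sum]
    rw [hG]
    simp only
    rw [hprod]
    have hrw : t ^ (α - 1) * (t : ℝ) ^ (N n) = t ^ (α + (N n : ℝ) - 1) := by
      rw [← Real.rpow_natCast t (N n), ← Real.rpow_add ht.1]
      ring_nf
    calc t ^ (α - 1) * (1 - t) ^ (γ - α - 1) * (c n * t ^ (N n))
        = c n * (t ^ (α - 1) * t ^ (N n) * (1 - t) ^ (γ - α - 1)) := by ring
      _ = c n * (t ^ (α + (N n : ℝ) - 1) * (1 - t) ^ (γ - α - 1)) := by rw [hrw]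
  -- integrability of each term
  have hint : ∀ n, IntegrableOn (G n) (Set.Ioc (0:ℝ) 1) := by
    intro n
    have hu : (0:ℝ) < α + (N n : ℝ) := by positivity
    have h : IntegrableOn
        (fun t : ℝ => c n * (t ^ (α + (N n : ℝ) - 1) * (1 - t) ^ (γ - α - 1)))
        (Set.Ioc (0:ℝ) 1) := (betaIntegrand_integrableOn hu hγα).const_mul (c n)
    exact h.congr_fun (fun t ht => (heq n t ht).symm) measurableSet_Ioc
  -- value of each integral
  have hval : ∀ n, (∫ t in Set.Ioc (0:ℝ) 1, G n t) = c n * (poch α (N n) / poch γ (N n) * B0) := by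
    intro n
    rw [setIntegral_congr_fun measurableSet_Ioc (heq n), integral_const_mul, haux (N n)]
  -- value of each norm integral
  have hnormval : ∀ n, (∫ t in Set.Ioc (0:ℝ) 1, ‖G n t‖)
      = |c n| * (poch α (N n) / poch γ (N n) * B0) := by
    intro n
    have : Set.EqOn (fun t => ‖G n t‖)
        (fun t => |c n| * (t ^ (α + (N n : ℝ) - 1) * (1 - t) ^ (γ - α - 1)))
        (Set.Ioc (0:ℝ) 1) := by
      intro t ht
      have hX : 0 ≤ t ^ (α + (N n : ℝ) - 1) * (1 - t) ^ (γ - α - 1) := by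
        have := Real.rpow_nonneg (le_of_lt ht.1) (α + (N n : ℝ) - 1)
        have := Real.rpow_nonneg (by linarith [ht.2] : (0:ℝ) ≤ 1 - t) (γ - α - 1)
        positivity
      simp only [Real.norm_eq_abs]
      rw [heq n t ht, abs_mul, abs_of_nonneg hX]
    rw [setIntegral_congr_fun measurableSet_Ioc this, integral_const_mul, haux (N n)]
  -- summability of the norm integrals
  have hsumnorm : Summable fun n => ∫ t in Set.Ioc (0:ℝ) 1, ‖G n t‖ := by
    refine Summable.of_nonneg_of_le
      (fun n => integral_nonneg fun t => norm_nonneg _) (fun n => ?_) (habsC.mul_right B0)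
    rw [hnormval n, ← habsc n]
    have h1 : |c n| * (poch α (N n) / poch γ (N n) * B0) ≤ |c n| * B0 :=
      mul_le_mul_of_nonneg_left (hauxle (N n)) (abs_nonneg _)
    calc |c n| * (poch α (N n) / poch γ (N n) * B0) ≤ |c n| * B0 := h1
      _ = |c n| * B0 := rfl
  -- the swap
  have hswap : ∑' n, (∫ t in Set.Ioc (0:ℝ) 1, G n t)
      = ∫ t in Set.Ioc (0:ℝ) 1, ∑' n, G n t :=
    integral_tsum_of_summable_integral_norm hint hsumnorm
  -- pointwise expansion of the original integrand
  have hpt : ∀ t ∈ Set.Ioc (0:ℝ) 1,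
      t ^ (α - 1) * (1 - t) ^ (γ - α - 1) * ∏ j, (1 - z j * t) ^ (-(β j))
        = ∑' n, G n t := by
    intro t ht
    have hzt : ∀ j, |z j * t| < 1 := by
      intro j
      rw [abs_mul, abs_of_pos ht.1]
      calc |z j| * t ≤ |z j| * 1 := by
            exact mul_le_mul_of_nonneg_left ht.2 (abs_nonneg _)
        _ = |z j| := mul_one _
        _ < 1 := hz j
    have hS := hasSum_pi_prod m
      (fun j k => poch (β j) k / (k.factorial : ℝ) * (z j * t) ^ k)
      (fun j => summable_abs_poch_mul_pow (β j) (z j * t) (hzt j))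
    have htsum : ∀ j : Fin m, (∑' k, poch (β j) k / (k.factorial : ℝ) * (z j * t) ^ k)
        = (1 - z j * t) ^ (-(β j)) := fun j => (hasSum_binomial (β j) (z j * t) (hzt j)).tsum_eq
    have hS2 : HasSum (fun n : Fin m → ℕ =>
        ∏ j, (poch (β j) (n j) / ((n j).factorial : ℝ) * (z j * t) ^ (n j)))
        (∏ j, (1 - z j * t) ^ (-(β j))) := by
      have := hS
      rwa [Finset.prod_congr rfl fun j _ => htsum j] at this
    have hS3 := hS2.mul_left (t ^ (α - 1) * (1 - t) ^ (γ - α - 1))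
    exact hS3.tsum_eq.symm
  -- final assembly
  have hper : ∀ n : Fin m → ℕ, c n * (poch α (N n) / poch γ (N n) * B0)
      = B0 * ((poch α (N n) * ∏ j, poch (β j) (n j)) /
          (poch γ (N n) * ∏ j, ((n j).factorial : ℝ)) * ∏ j, z j ^ (n j)) := by
    intro n
    have hcval : c n = (∏ j, poch (β j) (n j)) / (∏ j, ((n j).factorial : ℝ))
        * ∏ j, z j ^ (n j) := by
      show (∏ j, (poch (β j) (n j) / ((n j).factorial : ℝ) * z j ^ (n j))) = _
      rw [← Finset.prod_div_distrib, ← Finset.prod_mul_distrib]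
    rw [hcval]
    have h1 : poch γ (N n) ≠ 0 := ne_of_gt (poch_pos hγ _)
    have h2 : (∏ j, ((n j).factorial : ℝ)) ≠ 0 := by
      refine Finset.prod_ne_zero_iff.2 fun j _ => ?_
      exact_mod_cast (n j).factorial_ne_zero
    field_simp
  calc (∫ t in (0:ℝ)..1, t ^ (α - 1) * (1 - t) ^ (γ - α - 1) * ∏ j, (1 - z j * t) ^ (-(β j)))
      = ∫ t in Set.Ioc (0:ℝ) 1,
          t ^ (α - 1) * (1 - t) ^ (γ - α - 1) * ∏ j, (1 - z j * t) ^ (-(β j)) :=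
        intervalIntegral.integral_of_le zero_le_one
    _ = ∫ t in Set.Ioc (0:ℝ) 1, ∑' n, G n t := setIntegral_congr_fun measurableSet_Ioc hpt
    _ = ∑' n, (∫ t in Set.Ioc (0:ℝ) 1, G n t) := hswap.symm
    _ = ∑' n, c n * (poch α (N n) / poch γ (N n) * B0) := tsum_congr hval
    _ = ∑' n : Fin m → ℕ, B0 * ((poch α (N n) * ∏ j, poch (β j) (n j)) /
          (poch γ (N n) * ∏ j, ((n j).factorial : ℝ)) * ∏ j, z j ^ (n j)) := tsum_congr hper
    _ = B0 * ∑' n : Fin m → ℕ, ((poch α (N n) * ∏ j, poch (β j) (n j)) /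
          (poch γ (N n) * ∏ j, ((n j).factorial : ℝ)) * ∏ j, z j ^ (n j)) := tsum_mul_left
end

section
/- Let z₃, z_j, z_m be real numbers with z₃ < 0 < z_j < z_m. Then ∫₀^{z_j} dz / √( z·(z_m−z)·(z−z₃) ) = 2·(√z_j / z_m)·√((z_m−z_j)/(z_j−z₃)) · F₁(1, 1/2, 1/2, 3/2; z_j/z_m, z_j·(z_m−z₃)/(z_m·(z_j−z₃))). Equivalently, the integral equals (√z_j / z_m)·√((z_m−z_j)/(z_j−z₃)) · ∫₀¹ (1−u)^(−1/2)·(1 − u·z_j/z_m)^(−1/2)·(1 − u·z_j·(z_m−z₃)/(z_m·(z_j−z₃)))^(−1/2) du. -/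
set_option maxHeartbeats 1000000


open MeasureTheory

lemma rpow_neg_half_eq (t : ℝ) (ht : 0 ≤ t) : t ^ (-(1:ℝ)/2) = (Real.sqrt t)⁻¹ := by
  rw [Real.sqrt_eq_rpow, ← Real.rpow_neg ht]
  norm_num

theorem elliptic_integral_from_zero_closed_form (z₃ zj zm : ℝ)
    (h₃ : z₃ < 0) (h0 : 0 < zj) (hjm : zj < zm) :
    (∫ z in (0:ℝ)..zj, 1 / Real.sqrt (z * (zm - z) * (z - z₃))) =
      2 * (Real.sqrt zj / zm) * Real.sqrt ((zm - zj) / (zj - z₃)) *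
        F1 1 (1/2) (1/2) (3/2) (zj / zm) (zj * (zm - z₃) / (zm * (zj - z₃))) ∧
    (∫ z in (0:ℝ)..zj, 1 / Real.sqrt (z * (zm - z) * (z - z₃))) =
      (Real.sqrt zj / zm) * Real.sqrt ((zm - zj) / (zj - z₃)) *
        ∫ u in (0:ℝ)..1, (1 - u) ^ (-(1:ℝ)/2) * (1 - u * (zj / zm)) ^ (-(1:ℝ)/2) *
          (1 - u * (zj * (zm - z₃) / (zm * (zj - z₃)))) ^ (-(1:ℝ)/2) := by
  have hm : 0 < zm := h0.trans hjm
  have hmj : 0 < zm - zj := by linarith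
  have hj3 : 0 < zj - z₃ := by linarith
  have hm3 : 0 < zm - z₃ := by linarith
  set xv : ℝ := zj / zm with hxv
  set yv : ℝ := zj * (zm - z₃) / (zm * (zj - z₃)) with hyv
  set X : ℝ := Real.sqrt zj / zm * Real.sqrt ((zm - zj) / (zj - z₃)) with hX
  have hyv1 : yv < 1 := by
    rw [hyv, div_lt_one (by positivity)]
    nlinarith
  have hyv0 : 0 < yv := by rw [hyv]; positivity
  -- the substitution map
  set f : ℝ → ℝ := fun u => zj * zm * (1 - u) / (zm - u * zj) with hf
  set f' : ℝ → ℝ := fun u => zj * zm * (zj - zm) / (zm - u * zj) ^ 2 with hf'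
  have hD : ∀ u ∈ Set.Ioo (0:ℝ) 1, 0 < zm - u * zj := by
    rintro u ⟨hu0, hu1⟩; nlinarith
  have hderiv : ∀ u ∈ Set.Ioo (0:ℝ) 1, HasDerivWithinAt f (f' u) (Set.Ioo (0:ℝ) 1) u := by
    intro u hu
    have hDu : zm - u * zj ≠ 0 := (hD u hu).ne'
    have h1 : HasDerivAt (fun u : ℝ => zj * zm * (1 - u)) (zj * zm * (-1)) u := by
      simpa using ((hasDerivAt_id u).const_sub 1).const_mul (zj * zm)
    have h2 : HasDerivAt (fun u : ℝ => zm - u * zj) (-zj) u := by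
      simpa using ((hasDerivAt_id u).mul_const zj).const_sub zm
    have := h1.div h2 hDu
    have heq : (zj * zm * (-1) * (zm - u * zj) - zj * zm * (1 - u) * (-zj)) /
        (zm - u * zj) ^ 2 = f' u := by
      rw [hf']; field_simp; ring
    rw [← heq]
    exact this.hasDerivWithinAt
  have hinj : Set.InjOn f (Set.Ioo (0:ℝ) 1) := by
    intro u1 hu1 u2 hu2 h
    have hD1 : zm - u1 * zj ≠ 0 := (hD u1 hu1).ne'
    have hD2 : zm - u2 * zj ≠ 0 := (hD u2 hu2).ne'
    rw [hf] at h
    simp only [div_eq_div_iff hD1 hD2] at h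
    have : (u2 - u1) * (zj * zm * (zm - zj)) = 0 := by linear_combination h
    have hpos : zj * zm * (zm - zj) ≠ 0 := by positivity
    have := mul_eq_zero.1 this
    rcases this with h' | h'
    · linarith
    · exact absurd h' hpos
  have himg : f '' Set.Ioo (0:ℝ) 1 = Set.Ioo (0:ℝ) zj := by
    ext z
    constructor
    · rintro ⟨u, hu, rfl⟩
      obtain ⟨hu0, hu1⟩ := hu
      have hDu := hD u ⟨hu0, hu1⟩
      have h1u : 0 < 1 - u := by linarith
      constructor
      · rw [hf]; exact div_pos (by positivity) hDu
      · rw [hf, div_lt_iff₀ hDu]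
        nlinarith [mul_pos (mul_pos hu0 h0) hmj]
    · rintro ⟨hz0, hzj⟩
      refine ⟨zm * (zj - z) / (zj * (zm - z)), ⟨?_, ?_⟩, ?_⟩
      · have : 0 < zj * (zm - z) := by nlinarith
        apply div_pos (by nlinarith) this
      · rw [div_lt_one (by nlinarith)]; nlinarith
      · have hmz : (0:ℝ) < zm - z := by linarith
        have hne1 : zm - z ≠ 0 := hmz.ne'
        have hne2 : zj * (zm - z) ≠ 0 := by positivity
        have hden : zm - zm * (zj - z) / (zj * (zm - z)) * zj = zm * (zm - zj) / (zm - z) := by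
          field_simp
          ring
        have hden' : zm - zm * (zj - z) / (zj * (zm - z)) * zj ≠ 0 := by
          rw [hden]
          have : 0 < zm * (zm - zj) / (zm - z) := by
            apply div_pos (by positivity) (by linarith)
          exact this.ne'
        rw [hf]
        rw [div_eq_iff hden', hden]
        field_simp
        ring
  -- pointwise identity of integrands
  have hpt : ∀ u ∈ Set.Ioo (0:ℝ) 1,
      |f' u| • (1 / Real.sqrt (f u * (zm - f u) * (f u - z₃))) =
      X * ((1 - u) ^ (-(1:ℝ)/2) * (1 - u * xv) ^ (-(1:ℝ)/2) * (1 - u * yv) ^ (-(1:ℝ)/2)) := by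
    rintro u ⟨hu0, hu1⟩
    have hDu : 0 < zm - u * zj := hD u ⟨hu0, hu1⟩
    have h1u : 0 < 1 - u := by linarith
    have h1x : 0 < 1 - u * xv := by
      have : 1 - u * xv = (zm - u * zj) / zm := by rw [hxv]; field_simp
      rw [this]; positivity
    have h1y : 0 < 1 - u * yv := by nlinarith
    have hA : 0 < f u := by rw [hf]; exact div_pos (by positivity) hDu
    have hB : zm - f u = zm * (zm - zj) / (zm - u * zj) := by
      rw [hf, eq_div_iff hDu.ne', sub_mul, div_mul_cancel₀ _ hDu.ne']; ring
    have hC : f u - z₃ = zm * (zj - z₃) * (1 - u * yv) / (zm - u * zj) := by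
      rw [hf, eq_div_iff hDu.ne', sub_mul, div_mul_cancel₀ _ hDu.ne', hyv]; field_simp; ring
    have hB' : 0 < zm - f u := by rw [hB]; exact div_pos (by positivity) hDu
    have hC' : 0 < f u - z₃ := by rw [hC]; exact div_pos (by positivity) hDu
    have hP : 0 < f u * (zm - f u) * (f u - z₃) := by positivity
    rw [rpow_neg_half_eq _ h1u.le, rpow_neg_half_eq _ h1x.le, rpow_neg_half_eq _ h1y.le,
      smul_eq_mul]
    have ha : 0 ≤ |f' u| * (1 / Real.sqrt (f u * (zm - f u) * (f u - z₃))) := by positivity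
    have hb : 0 ≤ X * ((Real.sqrt (1 - u))⁻¹ * (Real.sqrt (1 - u * xv))⁻¹ *
        (Real.sqrt (1 - u * yv))⁻¹) := by rw [hX]; positivity
    have hsq : (|f' u| * (1 / Real.sqrt (f u * (zm - f u) * (f u - z₃)))) ^ 2 =
        (X * ((Real.sqrt (1 - u))⁻¹ * (Real.sqrt (1 - u * xv))⁻¹ *
          (Real.sqrt (1 - u * yv))⁻¹)) ^ 2 := by
      have e1 : Real.sqrt (f u * (zm - f u) * (f u - z₃)) ^ 2 =
          f u * (zm - f u) * (f u - z₃) := Real.sq_sqrt hP.le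
      have e2 : Real.sqrt (1 - u) ^ 2 = 1 - u := Real.sq_sqrt h1u.le
      have e3 : Real.sqrt (1 - u * xv) ^ 2 = 1 - u * xv := Real.sq_sqrt h1x.le
      have e4 : Real.sqrt (1 - u * yv) ^ 2 = 1 - u * yv := Real.sq_sqrt h1y.le
      have e5 : Real.sqrt zj ^ 2 = zj := Real.sq_sqrt h0.le
      have e6 : Real.sqrt ((zm - zj) / (zj - z₃)) ^ 2 = (zm - zj) / (zj - z₃) :=
        Real.sq_sqrt (by positivity)
      have hAeq : f u = zj * zm * (1 - u) / (zm - u * zj) := by rw [hf]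
      have hxeq : 1 - u * xv = (zm - u * zj) / zm := by
        rw [hxv]; field_simp
      have hfeq' : f' u = zj * zm * (zj - zm) / (zm - u * zj) ^ 2 := by rw [hf']
      rw [hX]
      simp only [mul_pow, div_pow, inv_pow, sq_abs, one_pow]
      rw [e1, e2, e3, e4, e5, e6]
      rw [hfeq', hAeq, hB, hC, hxeq]
      have h1 : zm - u * zj ≠ 0 := hDu.ne'
      have h2 : zm ≠ 0 := hm.ne'
      have h3 : (1:ℝ) - u ≠ 0 := h1u.ne'
      have h4 : zj - z₃ ≠ 0 := hj3.ne'
      have h5 : 1 - u * yv ≠ 0 := h1y.ne'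
      field_simp
      ring
    calc |f' u| * (1 / Real.sqrt (f u * (zm - f u) * (f u - z₃)))
        = Real.sqrt ((|f' u| * (1 / Real.sqrt (f u * (zm - f u) * (f u - z₃)))) ^ 2) :=
          (Real.sqrt_sq ha).symm
      _ = Real.sqrt ((X * ((Real.sqrt (1 - u))⁻¹ * (Real.sqrt (1 - u * xv))⁻¹ *
            (Real.sqrt (1 - u * yv))⁻¹)) ^ 2) := by rw [hsq]
      _ = X * ((Real.sqrt (1 - u))⁻¹ * (Real.sqrt (1 - u * xv))⁻¹ *
            (Real.sqrt (1 - u * yv))⁻¹) := Real.sqrt_sq hb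
  -- the second (integral) identity
  have key : (∫ z in (0:ℝ)..zj, 1 / Real.sqrt (z * (zm - z) * (z - z₃))) =
      X * ∫ u in (0:ℝ)..1, (1 - u) ^ (-(1:ℝ)/2) * (1 - u * xv) ^ (-(1:ℝ)/2) *
          (1 - u * yv) ^ (-(1:ℝ)/2) := by
    rw [intervalIntegral.integral_of_le h0.le, integral_Ioc_eq_integral_Ioo]
    rw [intervalIntegral.integral_of_le (by norm_num : (0:ℝ) ≤ 1), integral_Ioc_eq_integral_Ioo]
    rw [← himg,
      integral_image_eq_integral_abs_deriv_smul measurableSet_Ioo hderiv hinj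
        (fun z => 1 / Real.sqrt (z * (zm - z) * (z - z₃)))]
    rw [setIntegral_congr_fun measurableSet_Ioo hpt]
    rw [integral_const_mul]
  refine ⟨?_, key⟩
  rw [key]
  have hF1 : F1 1 (1/2) (1/2) (3/2) xv yv =
      (1/2) * ∫ u in (0:ℝ)..1, (1 - u) ^ (-(1:ℝ)/2) * (1 - u * xv) ^ (-(1:ℝ)/2) *
          (1 - u * yv) ^ (-(1:ℝ)/2) := by
    unfold F1
    have hG12 : 0 < Real.Gamma (1/2) := Real.Gamma_pos_of_pos (by norm_num)
    have h32 : Real.Gamma (3/2) = (1/2) * Real.Gamma (1/2) := by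
      rw [show (3:ℝ)/2 = 1/2 + 1 by norm_num, Real.Gamma_add_one (by norm_num)]
    have hfac : Real.Gamma (3/2) / (Real.Gamma 1 * Real.Gamma (3/2 - 1)) = 1/2 := by
      rw [show (3:ℝ)/2 - 1 = 1/2 by norm_num, Real.Gamma_one, h32]
      field_simp
    rw [hfac]
    congr 1
    apply intervalIntegral.integral_congr
    intro u _
    simp only [show (1:ℝ) - 1 = 0 by norm_num, Real.rpow_zero, one_mul,
      show (3:ℝ)/2 - 1 - 1 = -(1:ℝ)/2 by norm_num, show -((1:ℝ)/2) = -(1:ℝ)/2 by norm_num]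
  rw [hF1]
  ring
end

section
/- Let z₃, z_j, z_m be real numbers with z₃ < 0 ≤ z_j < z_m < 1. Then ∫_{z_j}^{z_m} dz / ( (1−z)·√( z·(z_m−z)·(z−z₃) ) ) = √((z_m−z_j)/z_m)·(1/√(z_m−z₃))·(2/(1−z_m)) · F_D(1/2, 1, 1/2, 1/2, 3/2; (z_j−z_m)/(1−z_m), (z_m−z_j)/z_m, (z_m−z_j)/(z_m−z₃)). Equivalently, the integral equals (√(z_m−z_j)/( √(z_m)·√(z_m−z₃)·(1−z_m) )) · ∫₀¹ t^(−1/2)·(1 − t·(z_j−z_m)/(1−z_m))^(−1)·(1 − t·(z_m−z_j)/z_m)^(−1/2)·(1 − t·(z_m−z_j)/(z_m−z₃))^(−1/2) dt. -/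
open MeasureTheory

theorem key_algebra (sL st szm sD sA2 sA3 e w : ℝ) (hL : sL ≠ 0) (ht : st ≠ 0)
    (hzm : szm ≠ 0) (hD : sD ≠ 0) (hA2 : sA2 ≠ 0) (hA3 : sA3 ≠ 0) (he : e ≠ 0) (hw : w ≠ 0) :
    sL * sL * (1 / (e * w * (szm * sA2 * (sL * st * (sD * sA3))))) =
      sL / (szm * sD * e) * (st⁻¹ * w⁻¹ * sA2⁻¹ * sA3⁻¹) := by
  field_simp

theorem subst_part (z₃ zj zm : ℝ)
    (h₃ : z₃ < 0) (h0 : 0 ≤ zj) (hjm : zj < zm) (hm1 : zm < 1) :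
    (∫ z in zj..zm, 1 / ((1 - z) * Real.sqrt (z * (zm - z) * (z - z₃)))) =
      Real.sqrt (zm - zj) / (Real.sqrt zm * Real.sqrt (zm - z₃) * (1 - zm)) *
        ∫ t in (0:ℝ)..1, t ^ (-(1:ℝ)/2) * (1 - t * ((zj - zm) / (1 - zm))) ^ (-(1:ℝ)) *
          (1 - t * ((zm - zj) / zm)) ^ (-(1:ℝ)/2) *
          (1 - t * ((zm - zj) / (zm - z₃))) ^ (-(1:ℝ)/2) := by
  have hzm : 0 < zm := lt_of_le_of_lt h0 hjm
  set L : ℝ := zm - zj with hLdef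
  have hL : 0 < L := sub_pos.mpr hjm
  have hD : 0 < zm - z₃ := by linarith
  have h1m : 0 < 1 - zm := by linarith
  set g : ℝ → ℝ := fun z => 1 / ((1 - z) * Real.sqrt (z * (zm - z) * (z - z₃))) with hg
  have step1 : (∫ z in zj..zm, g z) = L • ∫ t in (0:ℝ)..1, g (zm - L * t) := by
    have A := intervalIntegral.integral_comp_mul_left (a := (0:ℝ)) (b := 1)
      (fun u => g (zm - u)) hL.ne'
    simp only [mul_zero, mul_one] at A
    have B := intervalIntegral.integral_comp_sub_left (a := (0:ℝ)) (b := L) g zm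
    rw [show zm - L = zj by rw [hLdef]; ring, sub_zero] at B
    rw [A, B, smul_smul, mul_inv_cancel₀ hL.ne', one_smul]
  set C : ℝ := Real.sqrt L / (Real.sqrt zm * Real.sqrt (zm - z₃) * (1 - zm)) with hC
  have hpt : ∀ t ∈ Set.uIcc (0:ℝ) 1, L * g (zm - L * t) =
      C * (t ^ (-(1:ℝ)/2) * (1 - t * ((zj - zm) / (1 - zm))) ^ (-(1:ℝ)) *
        (1 - t * ((zm - zj) / zm)) ^ (-(1:ℝ)/2) *
        (1 - t * ((zm - zj) / (zm - z₃))) ^ (-(1:ℝ)/2)) := by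
    intro t ht
    rw [Set.uIcc_of_le (by norm_num : (0:ℝ) ≤ 1)] at ht
    obtain ⟨ht0, ht1⟩ := ht
    rcases eq_or_lt_of_le ht0 with rfl | htpos
    · simp [hg, Real.zero_rpow (by norm_num : -(1:ℝ)/2 ≠ 0), show zm - (zm - L * 0) = 0 by ring]
    have e1 : 1 - (zm - L * t) = (1 - zm) * (1 - t * ((zj - zm) / (1 - zm))) := by
      rw [hLdef]; field_simp; ring
    have e2 : zm - L * t = zm * (1 - t * ((zm - zj) / zm)) := by
      rw [hLdef]; field_simp
    have e3 : (zm - L * t) - z₃ = (zm - z₃) * (1 - t * ((zm - zj) / (zm - z₃))) := by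
      rw [hLdef]; field_simp; ring
    have hx1 : 0 < 1 - t * ((zj - zm) / (1 - zm)) := by
      have h' : 1 - t * ((zj - zm) / (1 - zm)) = (1 - zm + L * t) / (1 - zm) := by
        rw [hLdef]; field_simp; ring
      rw [h']; positivity
    have hLt : L * t ≤ L := by nlinarith
    have hx3 : 0 < 1 - t * ((zm - zj) / (zm - z₃)) := by
      have h' : 1 - t * ((zm - zj) / (zm - z₃)) = (zm - L * t - z₃) / (zm - z₃) := by
        rw [hLdef]; field_simp; ring
      rw [h']
      have : 0 < zm - L * t - z₃ := by linarith
      positivity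
    have hx2 : 0 ≤ 1 - t * ((zm - zj) / zm) := by
      have h' : 1 - t * ((zm - zj) / zm) = (zm - L * t) / zm := by
        rw [hLdef]; field_simp
      rw [h']
      have : 0 ≤ zm - L * t := by linarith
      positivity
    rcases eq_or_lt_of_le hx2 with hz0 | hx2
    · have hz : zm - L * t = 0 := by rw [e2, ← hz0, mul_zero]
      rw [← hz0, Real.zero_rpow (by norm_num : -(1:ℝ)/2 ≠ 0)]
      simp [hg, hz]
    · have hzpos : 0 < zm - L * t := by rw [e2]; positivity
      rw [hg]
      simp only []
      rw [show zm - (zm - L * t) = L * t by ring, e1]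
      rw [show (zm - L * t) * (L * t) * (zm - L * t - z₃)
          = (zm * (1 - t * ((zm - zj) / zm))) * ((L * t) *
            ((zm - z₃) * (1 - t * ((zm - zj) / (zm - z₃))))) by rw [← e2, ← e3]; ring]
      rw [Real.sqrt_mul (by positivity), Real.sqrt_mul (by positivity),
        Real.sqrt_mul (by positivity), Real.sqrt_mul hL.le, Real.sqrt_mul hD.le]
      rw [show -(1:ℝ)/2 = -(1/2) by ring, Real.rpow_neg ht0, Real.rpow_neg hx2.le,
        Real.rpow_neg hx3.le, Real.rpow_neg_one,
        ← Real.sqrt_eq_rpow, ← Real.sqrt_eq_rpow, ← Real.sqrt_eq_rpow]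
      rw [hC]
      nth_rewrite 1 [← Real.mul_self_sqrt hL.le]
      have s1 : Real.sqrt t ≠ 0 := by positivity
      have s2 : Real.sqrt L ≠ 0 := by positivity
      have s3 : Real.sqrt zm ≠ 0 := by positivity
      have s4 : Real.sqrt (zm - z₃) ≠ 0 := by positivity
      have s5 : Real.sqrt (1 - t * ((zm - zj) / zm)) ≠ 0 := by positivity
      have s6 : Real.sqrt (1 - t * ((zm - zj) / (zm - z₃))) ≠ 0 := by positivity
      have hx1' : (1 : ℝ) - t * ((zj - zm) / (1 - zm)) ≠ 0 := hx1.ne'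
      exact key_algebra (√L) (√t) (√zm) (√(zm - z₃)) (√(1 - t * ((zm - zj) / zm)))
        (√(1 - t * ((zm - zj) / (zm - z₃)))) (1 - zm) (1 - t * ((zj - zm) / (1 - zm)))
        s2 s1 s3 s4 s5 s6 h1m.ne' hx1.ne'
  calc (∫ z in zj..zm, g z) = L • ∫ t in (0:ℝ)..1, g (zm - L * t) := step1
    _ = ∫ t in (0:ℝ)..1, L * g (zm - L * t) := by
        rw [intervalIntegral.integral_const_mul, smul_eq_mul]
    _ = ∫ t in (0:ℝ)..1, C * (t ^ (-(1:ℝ)/2) * (1 - t * ((zj - zm) / (1 - zm))) ^ (-(1:ℝ)) *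
          (1 - t * ((zm - zj) / zm)) ^ (-(1:ℝ)/2) *
          (1 - t * ((zm - zj) / (zm - z₃))) ^ (-(1:ℝ)/2)) :=
        intervalIntegral.integral_congr hpt
    _ = C * ∫ t in (0:ℝ)..1, (t ^ (-(1:ℝ)/2) * (1 - t * ((zj - zm) / (1 - zm))) ^ (-(1:ℝ)) *
          (1 - t * ((zm - zj) / zm)) ^ (-(1:ℝ)/2) *
          (1 - t * ((zm - zj) / (zm - z₃))) ^ (-(1:ℝ)/2)) :=
        intervalIntegral.integral_const_mul _ _

theorem FD_eval (x₁ x₂ x₃ : ℝ) :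
    FD (1/2) 1 (1/2) (1/2) (3/2) x₁ x₂ x₃ =
      (1/2) * ∫ t in (0:ℝ)..1, t ^ (-(1:ℝ)/2) * (1 - t * x₁) ^ (-(1:ℝ)) *
        (1 - t * x₂) ^ (-(1:ℝ)/2) * (1 - t * x₃) ^ (-(1:ℝ)/2) := by
  unfold FD
  have hg : Real.Gamma (3/2) / (Real.Gamma (1/2) * Real.Gamma (3/2 - 1/2)) = 1/2 := by
    have h32 : Real.Gamma (3/2) = (1/2) * Real.Gamma (1/2) := by
      rw [show (3:ℝ)/2 = 1/2 + 1 by norm_num, Real.Gamma_add_one (by norm_num)]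
    rw [show (3:ℝ)/2 - 1/2 = 1 by norm_num, Real.Gamma_one, h32]
    have : Real.Gamma (1/2) ≠ 0 := by
      rw [Real.Gamma_one_half_eq]
      positivity
    field_simp
  rw [hg]
  congr 1
  apply intervalIntegral.integral_congr
  intro u _
  simp only
  rw [show (1:ℝ)/2 - 1 = -(1:ℝ)/2 by norm_num, show (3:ℝ)/2 - 1/2 - 1 = 0 by norm_num,
    Real.rpow_zero, mul_one, show -((1:ℝ)/2) = -(1:ℝ)/2 by norm_num]

theorem elliptic_integral_turning_point_closed_form (z₃ zj zm : ℝ)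
    (h₃ : z₃ < 0) (h0 : 0 ≤ zj) (hjm : zj < zm) (hm1 : zm < 1) :
    (∫ z in zj..zm, 1 / ((1 - z) * Real.sqrt (z * (zm - z) * (z - z₃)))) =
      Real.sqrt ((zm - zj) / zm) * (1 / Real.sqrt (zm - z₃)) * (2 / (1 - zm)) *
        FD (1/2) 1 (1/2) (1/2) (3/2) ((zj - zm) / (1 - zm)) ((zm - zj) / zm)
          ((zm - zj) / (zm - z₃)) ∧
    (∫ z in zj..zm, 1 / ((1 - z) * Real.sqrt (z * (zm - z) * (z - z₃)))) =
      Real.sqrt (zm - zj) / (Real.sqrt zm * Real.sqrt (zm - z₃) * (1 - zm)) *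
        ∫ t in (0:ℝ)..1, t ^ (-(1:ℝ)/2) * (1 - t * ((zj - zm) / (1 - zm))) ^ (-(1:ℝ)) *
          (1 - t * ((zm - zj) / zm)) ^ (-(1:ℝ)/2) *
          (1 - t * ((zm - zj) / (zm - z₃))) ^ (-(1:ℝ)/2) := by
  have hL : 0 ≤ zm - zj := le_of_lt (sub_pos.mpr hjm)
  have h2 := subst_part z₃ zj zm h₃ h0 hjm hm1
  refine ⟨?_, h2⟩
  have coef : ∀ a b c e : ℝ, a / (b * c * e) = a / b * (1 / c) * (2 / e) * (1 / 2) := by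
    intro a b c e; ring
  rw [h2, FD_eval, Real.sqrt_div hL,
    coef (Real.sqrt (zm - zj)) (Real.sqrt zm) (Real.sqrt (zm - z₃)) (1 - zm)]
  ring
end

section
/- Let z₃, z_j, z_m be real numbers with z₃ < 0 < z_j < z_m. Then ∫₀^{z_j} z·dz / √( z·(z_m−z)·(z−z₃) ) = (2/3) · ( z_j^{3/2}·√(z_m−z_j) / ( z_m·√(z_j−z₃) ) ) · F₁(1, 3/2, 1/2, 5/2; z_j/z_m, z_j·(z_m−z₃)/(z_m·(z_j−z₃))). Equivalently, the integral equals ( z_j^{3/2}·√(z_m−z_j) / ( z_m·√(z_j−z₃) ) ) · ∫₀¹ (1−u)^(1/2)·(1 − u·z_j/z_m)^(−3/2)·(1 − u·z_j·(z_m−z₃)/(z_m·(z_j−z₃)))^(−1/2) du. -/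
open MeasureTheory

private lemma etd_alg (z₃ zj zm u : ℝ) (h₃ : z₃ < 0) (h0 : 0 < zj) (hjm : zj < zm)
    (hu0 : 0 ≤ u) (hu1 : u ≤ 1) :
    zj*zm*(zm-zj)/(zm-u*zj)^2 *
      (Real.sqrt (zj*zm*(1-u)/(zm-u*zj)) /
       Real.sqrt ((zm*(zm-zj)/(zm-u*zj)) *
         (zm*(zj-z₃)*(1-u*(zj*(zm-z₃)/(zm*(zj-z₃))))/(zm-u*zj)))) =
    (zj ^ ((3:ℝ)/2) * Real.sqrt (zm - zj) / (zm * Real.sqrt (zj - z₃))) *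
      ((1 - u) ^ ((1:ℝ)/2) * (1 - u * (zj / zm)) ^ (-(3:ℝ)/2) *
        (1 - u * (zj * (zm - z₃) / (zm * (zj - z₃)))) ^ (-(1:ℝ)/2)) := by
  have hzm : 0 < zm := h0.trans hjm
  have hD : 0 < zm - u*zj := by nlinarith
  have hw : 0 ≤ 1 - u := by linarith
  have hmj : 0 < zm - zj := by linarith
  have hj3 : 0 < zj - z₃ := by linarith
  set y := zj * (zm - z₃) / (zm * (zj - z₃)) with hy
  have ht : 0 < 1 - u*y := by
    rw [hy]
    rw [show 1 - u * (zj * (zm - z₃) / (zm * (zj - z₃)))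
        = (zm * (zj - z₃) - u * (zj * (zm - z₃))) / (zm * (zj - z₃)) by
      field_simp]
    apply div_pos _ (by positivity)
    nlinarith [mul_pos h0 (show (0:ℝ) < zm - z₃ by linarith)]
  have hx : 1 - u * (zj / zm) = (zm - u*zj)/zm := by field_simp
  rw [hx]
  set D := zm - u*zj with hDdef
  set t := 1 - u*y with htdef
  rw [show (-(3:ℝ)/2) = -(3/2) by norm_num, show (-(1:ℝ)/2) = -(1/2) by norm_num,
    Real.rpow_neg (by positivity : (0:ℝ) ≤ D/zm), Real.rpow_neg ht.le,
    show ((3:ℝ)/2) = 1 + 1/2 by norm_num,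
    Real.rpow_add (by positivity : (0:ℝ) < D/zm), Real.rpow_one,
    ← Real.sqrt_eq_rpow, ← Real.sqrt_eq_rpow,
    show ((1:ℝ)/2 : ℝ) = 1/2 by norm_num, ← Real.sqrt_eq_rpow]
  rw [Real.rpow_add h0, Real.rpow_one, ← Real.sqrt_eq_rpow]
  set A := zj*zm*(zm-zj)/D^2 *
      (Real.sqrt (zj*zm*(1-u)/D) /
       Real.sqrt ((zm*(zm-zj)/D) * (zm*(zj-z₃)*t/D))) with hA
  set B := (zj * Real.sqrt zj * Real.sqrt (zm - zj) / (zm * Real.sqrt (zj - z₃))) *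
      (Real.sqrt (1-u) * ((D/zm) * Real.sqrt (D/zm))⁻¹ * (Real.sqrt t)⁻¹) with hB
  have hAnn : 0 ≤ A := by
    rw [hA]
    apply mul_nonneg (by positivity)
    positivity
  have hBnn : 0 ≤ B := by
    rw [hB]
    have : 0 ≤ D/zm := by positivity
    positivity
  have hsq : A^2 = B^2 := by
    rw [hA, hB]
    simp only [mul_pow, div_pow, inv_pow]
    rw [Real.sq_sqrt (by positivity : (0:ℝ) ≤ zj*zm*(1-u)/D),
      Real.sq_sqrt (show (0:ℝ) ≤ (zm*(zm-zj)/D) * (zm*(zj-z₃)*t/D) by positivity),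
      Real.sq_sqrt h0.le, Real.sq_sqrt hmj.le, Real.sq_sqrt hj3.le,
      Real.sq_sqrt hw, Real.sq_sqrt (by positivity : (0:ℝ) ≤ D/zm),
      Real.sq_sqrt ht.le]
    field_simp
  calc A = Real.sqrt (A^2) := (Real.sqrt_sq hAnn).symm
    _ = Real.sqrt (B^2) := by rw [hsq]
    _ = B := Real.sqrt_sq hBnn

private lemma etd_subst (z₃ zj zm : ℝ) (h₃ : z₃ < 0) (h0 : 0 < zj) (hjm : zj < zm) :
    (∫ z in (0:ℝ)..zj, z / Real.sqrt (z * (zm - z) * (z - z₃))) =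
      - ∫ u in (0:ℝ)..1, (zj*zm*(zj-zm)/(zm-u*zj)^2) *
          (Real.sqrt (zj*zm*(1-u)/(zm-u*zj)) /
           Real.sqrt ((zm - zj*zm*(1-u)/(zm-u*zj)) * (zj*zm*(1-u)/(zm-u*zj) - z₃))) := by
  have hzm : 0 < zm := h0.trans hjm
  have hDne : ∀ u : ℝ, u ∈ Set.uIcc (0:ℝ) 1 → zm - u*zj ≠ 0 := by
    intro u hu
    rw [Set.uIcc_of_le zero_le_one] at hu
    have : zm - u*zj ≥ zm - zj := by nlinarith [hu.1, hu.2]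
    nlinarith
  have hderiv : ∀ u ∈ Set.uIcc (0:ℝ) 1,
      HasDerivAt (fun u => zj*zm*(1-u)/(zm-u*zj)) (zj*zm*(zj-zm)/(zm-u*zj)^2) u := by
    intro u hu
    have hD := hDne u hu
    have h1 : HasDerivAt (fun u : ℝ => zj*zm*(1-u)) (-(zj*zm)) u := by
      simpa using ((hasDerivAt_id u).const_sub 1).const_mul (zj*zm)
    have h2 : HasDerivAt (fun u : ℝ => zm - u*zj) (-zj) u := by
      simpa using ((hasDerivAt_id u).mul_const zj).const_sub zm
    have := h1.div h2 hD
    refine this.congr_deriv ?_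
    ring
  have hcont' : ContinuousOn (fun u => zj*zm*(zj-zm)/(zm-u*zj)^2) (Set.uIcc (0:ℝ) 1) := by
    apply ContinuousOn.div continuousOn_const (by fun_prop)
    intro u hu
    exact pow_ne_zero 2 (hDne u hu)
  have himg : (fun u => zj*zm*(1-u)/(zm-u*zj)) '' Set.uIcc (0:ℝ) 1 ⊆ Set.Icc 0 zj := by
    rintro _ ⟨u, hu, rfl⟩
    rw [Set.uIcc_of_le zero_le_one] at hu
    obtain ⟨hu0, hu1⟩ := hu
    have hD : 0 < zm - u*zj := by nlinarith
    constructor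
    · apply div_nonneg _ hD.le
      have := mul_nonneg (mul_nonneg h0.le hzm.le) (by linarith : (0:ℝ) ≤ 1-u)
      linarith
    · rw [div_le_iff₀ hD]
      nlinarith [mul_nonneg (mul_nonneg h0.le hu0) (sub_nonneg.mpr hjm.le)]
  have hgc : ContinuousOn (fun z => Real.sqrt z / Real.sqrt ((zm-z)*(z-z₃)))
      (Set.Icc 0 zj) := by
    apply ContinuousOn.div (Real.continuous_sqrt.continuousOn)
      ((Real.continuous_sqrt.comp (by fun_prop)).continuousOn)
    intro z hz
    have : (0:ℝ) < (zm - z) * (z - z₃) :=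
      mul_pos (by linarith [hz.2]) (by linarith [hz.1])
    exact (Real.sqrt_pos.mpr this).ne'
  have key := intervalIntegral.integral_comp_smul_deriv' (a := (0:ℝ)) (b := 1)
    hderiv hcont' (hgc.mono himg)
  simp only [Function.comp, smul_eq_mul] at key
  have e0 : zj*zm*(1-(0:ℝ))/(zm-0*zj) = zj := by simp [hzm.ne']
  have e1 : zj*zm*(1-(1:ℝ))/(zm-1*zj) = 0 := by
    rw [show (1:ℝ)-1 = 0 by norm_num]
    simp
  rw [e0, e1, intervalIntegral.integral_symm 0 zj] at key
  have key2 : (∫ z in (0:ℝ)..zj, Real.sqrt z / Real.sqrt ((zm-z)*(z-z₃)))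
      = - ∫ u in (0:ℝ)..1, (zj*zm*(zj-zm)/(zm-u*zj)^2) *
          (Real.sqrt (zj*zm*(1-u)/(zm-u*zj)) /
           Real.sqrt ((zm - zj*zm*(1-u)/(zm-u*zj)) * (zj*zm*(1-u)/(zm-u*zj) - z₃))) := by
    rw [key, neg_neg]
  rw [← key2]
  apply intervalIntegral.integral_congr
  intro z hz
  rw [Set.uIcc_of_le h0.le] at hz
  show z / Real.sqrt (z * (zm - z) * (z - z₃)) = Real.sqrt z / Real.sqrt ((zm - z) * (z - z₃))
  rw [mul_assoc, Real.sqrt_mul hz.1, ← div_div, Real.div_sqrt]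

private lemma etd_second (z₃ zj zm : ℝ) (h₃ : z₃ < 0) (h0 : 0 < zj) (hjm : zj < zm) :
    (∫ z in (0:ℝ)..zj, z / Real.sqrt (z * (zm - z) * (z - z₃))) =
      (zj ^ ((3:ℝ)/2) * Real.sqrt (zm - zj) / (zm * Real.sqrt (zj - z₃))) *
        ∫ u in (0:ℝ)..1, (1 - u) ^ ((1:ℝ)/2) * (1 - u * (zj / zm)) ^ (-(3:ℝ)/2) *
          (1 - u * (zj * (zm - z₃) / (zm * (zj - z₃)))) ^ (-(1:ℝ)/2) := by
  have hzm : 0 < zm := h0.trans hjm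
  rw [etd_subst z₃ zj zm h₃ h0 hjm, ← intervalIntegral.integral_neg]
  rw [show ((zj ^ ((3:ℝ)/2) * Real.sqrt (zm - zj) / (zm * Real.sqrt (zj - z₃))) *
        ∫ u in (0:ℝ)..1, (1 - u) ^ ((1:ℝ)/2) * (1 - u * (zj / zm)) ^ (-(3:ℝ)/2) *
          (1 - u * (zj * (zm - z₃) / (zm * (zj - z₃)))) ^ (-(1:ℝ)/2))
      = ∫ u in (0:ℝ)..1, (zj ^ ((3:ℝ)/2) * Real.sqrt (zm - zj) / (zm * Real.sqrt (zj - z₃))) *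
          ((1 - u) ^ ((1:ℝ)/2) * (1 - u * (zj / zm)) ^ (-(3:ℝ)/2) *
            (1 - u * (zj * (zm - z₃) / (zm * (zj - z₃)))) ^ (-(1:ℝ)/2))
      from (intervalIntegral.integral_const_mul _ _).symm]
  apply intervalIntegral.integral_congr
  intro u hu
  rw [Set.uIcc_of_le zero_le_one] at hu
  obtain ⟨hu0, hu1⟩ := hu
  have hDne : zm - u*zj ≠ 0 := by nlinarith
  have hj3 : zj - z₃ ≠ 0 := by nlinarith
  have ea : zm - zj*zm*(1-u)/(zm-u*zj) = zm*(zm-zj)/(zm-u*zj) := by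
    rw [eq_div_iff hDne, sub_mul, div_mul_cancel₀ _ hDne]
    ring
  have eb : zj*zm*(1-u)/(zm-u*zj) - z₃
      = zm*(zj-z₃)*(1-u*(zj*(zm-z₃)/(zm*(zj-z₃))))/(zm-u*zj) := by
    rw [eq_div_iff hDne, sub_mul, div_mul_cancel₀ _ hDne]
    have h : zm*(zj-z₃)*(zj*(zm-z₃)/(zm*(zj-z₃))) = zj*(zm-z₃) := by
      rw [mul_div_assoc']; exact mul_div_cancel_left₀ _ (mul_ne_zero hzm.ne' hj3)
    linear_combination u * h
  show -((zj*zm*(zj-zm)/(zm-u*zj)^2) *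
          (Real.sqrt (zj*zm*(1-u)/(zm-u*zj)) /
           Real.sqrt ((zm - zj*zm*(1-u)/(zm-u*zj)) * (zj*zm*(1-u)/(zm-u*zj) - z₃)))) = _
  rw [ea, eb]
  rw [show -((zj*zm*(zj-zm)/(zm-u*zj)^2) *
          (Real.sqrt (zj*zm*(1-u)/(zm-u*zj)) /
           Real.sqrt ((zm*(zm-zj)/(zm-u*zj)) *
             (zm*(zj-z₃)*(1-u*(zj*(zm-z₃)/(zm*(zj-z₃))))/(zm-u*zj)))))
      = zj*zm*(zm-zj)/(zm-u*zj)^2 *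
          (Real.sqrt (zj*zm*(1-u)/(zm-u*zj)) /
           Real.sqrt ((zm*(zm-zj)/(zm-u*zj)) *
             (zm*(zj-z₃)*(1-u*(zj*(zm-z₃)/(zm*(zj-z₃))))/(zm-u*zj)))) from by ring]
  exact etd_alg z₃ zj zm u h₃ h0 hjm hu0 hu1

theorem elliptic_integral_time_delay_closed_form (z₃ zj zm : ℝ)
    (h₃ : z₃ < 0) (h0 : 0 < zj) (hjm : zj < zm) :
    (∫ z in (0:ℝ)..zj, z / Real.sqrt (z * (zm - z) * (z - z₃))) =
      (2/3) * (zj ^ ((3:ℝ)/2) * Real.sqrt (zm - zj) / (zm * Real.sqrt (zj - z₃))) *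
        F1 1 (3/2) (1/2) (5/2) (zj / zm) (zj * (zm - z₃) / (zm * (zj - z₃))) ∧
    (∫ z in (0:ℝ)..zj, z / Real.sqrt (z * (zm - z) * (z - z₃))) =
      (zj ^ ((3:ℝ)/2) * Real.sqrt (zm - zj) / (zm * Real.sqrt (zj - z₃))) *
        ∫ u in (0:ℝ)..1, (1 - u) ^ ((1:ℝ)/2) * (1 - u * (zj / zm)) ^ (-(3:ℝ)/2) *
          (1 - u * (zj * (zm - z₃) / (zm * (zj - z₃)))) ^ (-(1:ℝ)/2) := by
  have hsecond := etd_second z₃ zj zm h₃ h0 hjm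
  refine ⟨?_, hsecond⟩
  rw [hsecond, F1]
  have hG : Real.Gamma (5/2) / (Real.Gamma 1 * Real.Gamma (5/2 - 1)) = 3/2 := by
    rw [show (5:ℝ)/2 = 3/2 + 1 by norm_num, Real.Gamma_add_one (by norm_num : (3:ℝ)/2 ≠ 0),
      Real.Gamma_one, show (3:ℝ)/2 + 1 - 1 = 3/2 by norm_num]
    have h32 : Real.Gamma (3/2) ≠ 0 := (Real.Gamma_pos_of_pos (by norm_num)).ne'
    field_simp
  rw [hG]
  have hint : (∫ u in (0:ℝ)..1, u ^ ((1:ℝ) - 1) * (1 - u) ^ ((5:ℝ)/2 - 1 - 1) *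
      (1 - u * (zj/zm)) ^ (-((3:ℝ)/2)) *
      (1 - u * (zj * (zm - z₃) / (zm * (zj - z₃)))) ^ (-((1:ℝ)/2)))
      = ∫ u in (0:ℝ)..1, (1 - u) ^ ((1:ℝ)/2) * (1 - u * (zj / zm)) ^ (-(3:ℝ)/2) *
          (1 - u * (zj * (zm - z₃) / (zm * (zj - z₃)))) ^ (-(1:ℝ)/2) := by
    apply intervalIntegral.integral_congr
    intro u hu
    show u ^ ((1:ℝ) - 1) * (1 - u) ^ ((5:ℝ)/2 - 1 - 1) *
      (1 - u * (zj/zm)) ^ (-((3:ℝ)/2)) *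
      (1 - u * (zj * (zm - z₃) / (zm * (zj - z₃)))) ^ (-((1:ℝ)/2)) = _
    rw [show (1:ℝ) - 1 = 0 by norm_num, Real.rpow_zero, one_mul,
      show (5:ℝ)/2 - 1 - 1 = 1/2 by norm_num,
      show -((3:ℝ)/2) = -(3:ℝ)/2 by norm_num,
      show -((1:ℝ)/2) = -(1:ℝ)/2 by norm_num]
  rw [hint]
  ring
end

section
/- Let α, β, γ, δ be real numbers with α > β > γ > δ. Then the improper integral over (α, ∞) satisfies ∫_α^∞ dr / √( (r−α)·(r−β)·(r−γ)·(r−δ) ) = ( 2/√((α−γ)·(α−δ)) ) · F₁(1/2, 1/2, 1/2, 3/2; (β−γ)/(α−γ), (δ−β)/(δ−α)). Equivalently, the integral equals (1/√((α−γ)·(α−δ))) · ∫₀¹ t^(−1/2)·(1 − t·(β−γ)/(α−γ))^(−1/2)·(1 − t·(β−δ)/(α−δ))^(−1/2) dt. -/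
open MeasureTheory

theorem radial_integral_closed_form (α β γ δ : ℝ)
    (hαβ : β < α) (hβγ : γ < β) (hγδ : δ < γ) :
    (∫ r in Set.Ioi α, 1 / Real.sqrt ((r - α) * (r - β) * (r - γ) * (r - δ))) =
      (2 / Real.sqrt ((α - γ) * (α - δ))) *
        F1 (1/2) (1/2) (1/2) (3/2) ((β - γ) / (α - γ)) ((δ - β) / (δ - α)) ∧
    (∫ r in Set.Ioi α, 1 / Real.sqrt ((r - α) * (r - β) * (r - γ) * (r - δ))) =
      (1 / Real.sqrt ((α - γ) * (α - δ))) *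
        ∫ t in (0:ℝ)..1, t ^ (-(1:ℝ)/2) * (1 - t * ((β - γ) / (α - γ))) ^ (-(1:ℝ)/2) *
          (1 - t * ((β - δ) / (α - δ))) ^ (-(1:ℝ)/2) := by
  have hαγ : γ < α := hβγ.trans hαβ
  have hβδ : δ < β := hγδ.trans hβγ
  have hαδ : δ < α := hβδ.trans hαβ
  have hE : (0:ℝ) < α - β := by linarith
  have hAG : (0:ℝ) < α - γ := by linarith
  have hAD : (0:ℝ) < α - δ := by linarith
  set x : ℝ := (β - γ) / (α - γ) with hx
  set y : ℝ := (β - δ) / (α - δ) with hy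
  set K : ℝ := (α - γ) * (α - δ) with hK
  have hKpos : 0 < K := mul_pos hAG hAD
  have hx01 : 0 < x ∧ x < 1 := by
    constructor
    · exact div_pos (by linarith) hAG
    · rw [hx, div_lt_one hAG]; linarith
  have hy01 : 0 < y ∧ y < 1 := by
    constructor
    · exact div_pos (by linarith) hAD
    · rw [hy, div_lt_one hAD]; linarith
  set f : ℝ → ℝ := fun t => β + (α - β) / (1 - t) with hf
  -- second conjunct first
  have key : (∫ r in Set.Ioi α, 1 / Real.sqrt ((r - α) * (r - β) * (r - γ) * (r - δ))) =
      (1 / Real.sqrt K) *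
        ∫ t in (0:ℝ)..1, t ^ (-(1:ℝ)/2) * (1 - t * x) ^ (-(1:ℝ)/2) *
          (1 - t * y) ^ (-(1:ℝ)/2) := by
    have himg : f '' Set.Ioo (0:ℝ) 1 = Set.Ioi α := by
      ext r
      simp only [Set.mem_image, Set.mem_Ioo, Set.mem_Ioi]
      constructor
      · rintro ⟨t, ⟨ht0, ht1⟩, rfl⟩
        have h1t : 0 < 1 - t := by linarith
        have : α - β < (α - β) / (1 - t) := by
          rw [lt_div_iff₀ h1t]; nlinarith
        simp only [hf]; linarith
      · intro hr
        refine ⟨(r - α) / (r - β), ⟨?_, ?_⟩, ?_⟩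
        · exact div_pos (by linarith) (by linarith)
        · rw [div_lt_one (by linarith)]; linarith
        · have hrβ : r - β ≠ 0 := by intro h; nlinarith
          simp only [hf]
          rw [show (1 : ℝ) - (r - α) / (r - β) = (α - β) / (r - β) by
            field_simp; ring]
          have h2 : (α - β) / ((α - β) / (r - β)) = r - β := by
            rw [div_div_eq_mul_div, mul_comm, mul_div_assoc, div_self (ne_of_gt hE), mul_one]
          rw [h2]; ring
    have hderiv : ∀ t ∈ Set.Ioo (0:ℝ) 1,
        HasDerivWithinAt f ((α - β) / (1 - t) ^ 2) (Set.Ioo (0:ℝ) 1) t := by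
      intro t ht
      have h1t : (1:ℝ) - t ≠ 0 := by simp only [Set.mem_Ioo] at ht; intro h; linarith [ht.2]
      have h1 : HasDerivAt (fun s : ℝ => 1 - s) (-1) t := by
        simpa using (hasDerivAt_id t).const_sub 1
      have h2 : HasDerivAt (fun s : ℝ => (1 - s)⁻¹) (-(-1) / (1 - t) ^ 2) t := h1.inv h1t
      have h3 : HasDerivAt f ((α - β) * (-(-1) / (1 - t) ^ 2)) t := by
        simpa [hf, div_eq_mul_inv] using (h2.const_mul (α - β)).const_add β
      have h4 : HasDerivAt f ((α - β) / (1 - t) ^ 2) t := by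
        convert h3 using 1; ring
      exact h4.hasDerivWithinAt
    have hinj : Set.InjOn f (Set.Ioo (0:ℝ) 1) := by
      intro a ha b hb hab
      simp only [Set.mem_Ioo] at ha hb
      have ha1 : (1:ℝ) - a ≠ 0 := by intro h; linarith [ha.2]
      have hb1 : (1:ℝ) - b ≠ 0 := by intro h; linarith [hb.2]
      simp only [hf, add_right_inj] at hab
      rw [div_eq_div_iff ha1 hb1] at hab
      nlinarith [hab]
    rw [← himg, MeasureTheory.integral_image_eq_integral_abs_deriv_smul
        measurableSet_Ioo hderiv hinj]
    rw [intervalIntegral.integral_of_le zero_le_one,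
      MeasureTheory.integral_Ioc_eq_integral_Ioo, ← MeasureTheory.integral_const_mul]
    refine setIntegral_congr_fun measurableSet_Ioo fun t ht => ?_
    simp only [Set.mem_Ioo] at ht
    obtain ⟨ht0, ht1⟩ := ht
    have h1t : 0 < 1 - t := by linarith
    have hB : 0 < 1 - t * x := by nlinarith [hx01.1, hx01.2]
    have hC : 0 < 1 - t * y := by nlinarith [hy01.1, hy01.2]
    have hprod : (f t - α) * (f t - β) * (f t - γ) * (f t - δ) =
        (t * (1 - t * x) * (1 - t * y) * (K * (α - β) ^ 2)) / ((1 - t) ^ 2) ^ 2 := by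
      simp only [hf, hx, hy, hK]
      field_simp
      ring
    have hsq : Real.sqrt ((f t - α) * (f t - β) * (f t - γ) * (f t - δ)) =
        (Real.sqrt t * Real.sqrt (1 - t * x) * Real.sqrt (1 - t * y) *
          (Real.sqrt K * (α - β))) / (1 - t) ^ 2 := by
      rw [hprod, Real.sqrt_div (by positivity), Real.sqrt_sq (by positivity),
        Real.sqrt_mul (by positivity), Real.sqrt_mul (by positivity),
        Real.sqrt_mul (by positivity), Real.sqrt_mul (le_of_lt hKpos),
        Real.sqrt_sq hE.le]
    have hrpow : ∀ z : ℝ, 0 < z → z ^ (-(1:ℝ)/2) = 1 / Real.sqrt z := by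
      intro z hz
      rw [Real.sqrt_eq_rpow, one_div, ← Real.rpow_neg hz.le]
      norm_num
    have habs : |(α - β) / (1 - t) ^ 2| = (α - β) / (1 - t) ^ 2 :=
      abs_of_pos (by positivity)
    rw [smul_eq_mul, habs, hsq, hrpow t ht0, hrpow _ hB, hrpow _ hC]
    have hst : 0 < Real.sqrt t := Real.sqrt_pos.mpr ht0
    have hsB : 0 < Real.sqrt (1 - t * x) := Real.sqrt_pos.mpr hB
    have hsC : 0 < Real.sqrt (1 - t * y) := Real.sqrt_pos.mpr hC
    have hsK : 0 < Real.sqrt K := Real.sqrt_pos.mpr hKpos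
    field_simp
  refine ⟨?_, key⟩
  -- first conjunct: reduce F1 to the same interval integral
  have hGhalf : Real.Gamma (1/2 : ℝ) = Real.sqrt Real.pi := Real.Gamma_one_half_eq
  have hG32 : Real.Gamma (3/2 : ℝ) = (1/2) * Real.Gamma (1/2) := by
    have := Real.Gamma_add_one (s := (1/2 : ℝ)) (by norm_num)
    norm_num at this ⊢
    linarith
  have hGne : Real.Gamma (1/2 : ℝ) ≠ 0 := by
    rw [hGhalf]; positivity
  have hF1 : F1 (1/2) (1/2) (1/2) (3/2) ((β - γ) / (α - γ)) ((δ - β) / (δ - α)) =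
      (1/2) * ∫ t in (0:ℝ)..1, t ^ (-(1:ℝ)/2) * (1 - t * x) ^ (-(1:ℝ)/2) *
          (1 - t * y) ^ (-(1:ℝ)/2) := by
    unfold F1
    have hcoef : Real.Gamma (3/2 : ℝ) / (Real.Gamma (1/2) * Real.Gamma (3/2 - 1/2)) =
        1/2 := by
      rw [show (3/2 : ℝ) - 1/2 = 1 by norm_num, Real.Gamma_one, hG32]
      field_simp
    rw [hcoef]
    congr 1
    apply intervalIntegral.integral_congr
    intro u _
    have hyy : (δ - β) / (δ - α) = y := by
      rw [hy, show δ - β = -(β - δ) by ring, show δ - α = -(α - δ) by ring,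
        neg_div_neg_eq]
    rw [hyy, ← hx]
    norm_num
  rw [key, hF1]
  ring
end

section
/- Let a > 0 be real, let z_O ∈ [0,1] and set w_O := 1 − z_O. Let α_i, β_i be real numbers, and define Φ := −α_i·√(w_O), Q := β_i² + (α_i² − a²)·z_O, and z_m := ( a² − Q − Φ² + √( 4·a²·Q + (−a² + Q + Φ²)² ) ) / (2·a²). Then the discriminant satisfies the identity 4·a²·Q + (−a² + Q + Φ²)² = ( (α_i² + β_i²) − a²·w_O )² + 4·a²·β_i²·w_O ≥ 0, and consequently z_m ≥ z_O. -/
theorem polar_turning_point_bound (a zO wO αi βi Φ Q zm : ℝ)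
    (ha : 0 < a) (hzO0 : 0 ≤ zO) (hzO1 : zO ≤ 1) (hwO : wO = 1 - zO)
    (hΦ : Φ = -αi * Real.sqrt wO)
    (hQ : Q = βi ^ 2 + (αi ^ 2 - a ^ 2) * zO)
    (hzm : zm = (a ^ 2 - Q - Φ ^ 2 +
      Real.sqrt (4 * a ^ 2 * Q + (-a ^ 2 + Q + Φ ^ 2) ^ 2)) / (2 * a ^ 2)) :
    4 * a ^ 2 * Q + (-a ^ 2 + Q + Φ ^ 2) ^ 2 =
      ((αi ^ 2 + βi ^ 2) - a ^ 2 * wO) ^ 2 + 4 * a ^ 2 * βi ^ 2 * wO ∧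
    0 ≤ 4 * a ^ 2 * Q + (-a ^ 2 + Q + Φ ^ 2) ^ 2 ∧
    zm ≥ zO := by
  have hw0 : 0 ≤ wO := by rw [hwO]; linarith
  have hΦ2 : Φ ^ 2 = αi ^ 2 * wO := by
    rw [hΦ, mul_pow]
    rw [Real.sq_sqrt hw0]; ring
  have hid : 4 * a ^ 2 * Q + (-a ^ 2 + Q + Φ ^ 2) ^ 2 =
      ((αi ^ 2 + βi ^ 2) - a ^ 2 * wO) ^ 2 + 4 * a ^ 2 * βi ^ 2 * wO := by
    rw [hQ, hΦ2, hwO]; ring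
  have hD0 : 0 ≤ 4 * a ^ 2 * Q + (-a ^ 2 + Q + Φ ^ 2) ^ 2 := by
    rw [hid]; positivity
  refine ⟨hid, hD0, ?_⟩
  set c : ℝ := a ^ 2 - Q - Φ ^ 2 with hc
  set D : ℝ := 4 * a ^ 2 * Q + (-a ^ 2 + Q + Φ ^ 2) ^ 2 with hDdef
  have hkey : (2 * a ^ 2 * zO - c) ^ 2 ≤ D := by
    have hf : D - (2 * a ^ 2 * zO - c) ^ 2 = 4 * a ^ 2 * (βi ^ 2 * wO) := by
      rw [hDdef, hc, hQ, hΦ2, hwO]; ring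
    nlinarith [sq_nonneg βi, mul_nonneg (sq_nonneg βi) hw0, sq_nonneg a]
  have hsq : 2 * a ^ 2 * zO - c ≤ Real.sqrt D := by
    calc 2 * a ^ 2 * zO - c ≤ |2 * a ^ 2 * zO - c| := le_abs_self _
    _ = Real.sqrt ((2 * a ^ 2 * zO - c) ^ 2) := (Real.sqrt_sq_eq_abs _).symm
    _ ≤ Real.sqrt D := Real.sqrt_le_sqrt hkey
  have ha2 : 0 < 2 * a ^ 2 := by positivity
  rw [hzm, ge_iff_le, le_div_iff₀ ha2]
  nlinarith [hsq]
end
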